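/- arXiv:2112.01481 — 3 statements merged into one kernel-verified Lean document; each statement's English description precedes it below -/
import Mathlib

section
/- Let $k$ be a field of characteristic 0, $S = k[x,y,z,w]$, $n_1, n_2 \ge 2$, $I = (x,y)^{n_1} + (z,w)^{n_2} + (xz-yw)$, and $A = S/I$. Every $S$-module homomorphism $\varphi : I \to A$ that is graded of degree $j \le -2$ (i.e. $\varphi(I_m) \subseteq A_{m+j}$ for all $m$) is zero. -/
open MvPolynomial Pointwise

namespace Stmt13Aux

variable {k : Type*} [Field k]

noncomputable def vec4 (p q r t : ℕ) : Fin 4 →₀ ℕ :=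
  Finsupp.single 0 p + Finsupp.single 1 q + Finsupp.single 2 r + Finsupp.single 3 t

lemma vec4_apply (p q r t : ℕ) (i : Fin 4) :
    vec4 p q r t i = ![p, q, r, t] i := by
  fin_cases i <;> simp [vec4]

lemma vec4_eq (s : Fin 4 →₀ ℕ) : s = vec4 (s 0) (s 1) (s 2) (s 3) := by
  ext i
  fin_cases i <;> simp [vec4_apply]

lemma mono4 (p q r t : ℕ) (c : k) :
    (monomial (vec4 p q r t) c : MvPolynomial (Fin 4) k)
      = C c * X 0 ^ p * X 1 ^ q * X 2 ^ r * X 3 ^ t := by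
  rw [monomial_eq]
  rw [Finsupp.prod_fintype _ _ (fun i => pow_zero _)]
  rw [Fin.prod_univ_four]
  simp only [vec4_apply]
  norm_num [mul_assoc]
  exact Or.inl rfl

/-- the exponent transformation of `Phi` -/
noncomputable def Emap (s : Fin 4 →₀ ℕ) : Fin 4 →₀ ℕ :=
  vec4 (s 0 + s 1) (s 2 + s 3) (s 0 + s 3) (s 1 + s 2)

/-- the parametrization of the quadric cone -/
noncomputable def Phi : MvPolynomial (Fin 4) k →ₐ[k] MvPolynomial (Fin 4) k :=
  aeval ![X 0 * X 2, X 0 * X 3, X 1 * X 3, X 1 * X 2]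

lemma Phi_monomial (s : Fin 4 →₀ ℕ) (c : k) :
    Phi (monomial s c) = (monomial (Emap s) c : MvPolynomial (Fin 4) k) := by
  rw [Phi, aeval_monomial, Finsupp.prod_fintype _ _ (fun i => pow_zero _),
    Fin.prod_univ_four]
  rw [Emap, mono4]
  simp only [Matrix.cons_val_zero, Matrix.cons_val_one, Matrix.head_cons,
    Matrix.cons_val_two, Matrix.tail_cons, Matrix.cons_val_three, algebraMap_eq]
  ring

lemma Phi_as_sum (p : MvPolynomial (Fin 4) k) :
    Phi p = ∑ s ∈ p.support, (monomial (Emap s) (coeff s p) : MvPolynomial (Fin 4) k) := by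
  conv_lhs => rw [p.as_sum, map_sum]
  exact Finset.sum_congr rfl fun s _ => Phi_monomial s _

lemma Phi_coeff_ne_zero {p : MvPolynomial (Fin 4) k} {t : Fin 4 →₀ ℕ}
    (h : coeff t (Phi p) ≠ 0) : ∃ s ∈ p.support, Emap s = t := by
  rw [Phi_as_sum] at h
  by_contra hc
  push_neg at hc
  apply h
  rw [coeff_sum]
  refine Finset.sum_eq_zero fun s hs => ?_
  rw [coeff_monomial, if_neg (hc s hs)]

lemma Emap_apply (s : Fin 4 →₀ ℕ) :
    Emap s 0 = s 0 + s 1 ∧ Emap s 1 = s 2 + s 3 ∧ Emap s 2 = s 0 + s 3 ∧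
      Emap s 3 = s 1 + s 2 := by
  refine ⟨?_, ?_, ?_, ?_⟩ <;> simp [Emap, vec4_apply]

lemma Emap_injOn {s t : Fin 4 →₀ ℕ} (hs : min (s 0) (s 2) = 0)
    (ht : min (t 0) (t 2) = 0) (h : Emap s = Emap t) : s = t := by
  obtain ⟨e1, e2, e3, e4⟩ := Emap_apply s
  obtain ⟨f1, f2, f3, f4⟩ := Emap_apply t
  have h0 : Emap s 0 = Emap t 0 := by rw [h]
  have h1 : Emap s 1 = Emap t 1 := by rw [h]
  have h2 : Emap s 2 = Emap t 2 := by rw [h]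
  have h3 : Emap s 3 = Emap t 3 := by rw [h]
  rw [e1, f1] at h0; rw [e2, f2] at h1; rw [e3, f3] at h2; rw [e4, f4] at h3
  have g0 : s 0 = t 0 := by omega
  have g1 : s 1 = t 1 := by omega
  have g2 : s 2 = t 2 := by omega
  have g3 : s 3 = t 3 := by omega
  ext i
  fin_cases i
  · exact g0
  · exact g1
  · exact g2
  · exact g3

/-- injectivity of Phi on xz-free polynomials -/
lemma Phi_inj {p : MvPolynomial (Fin 4) k}
    (hfree : ∀ s ∈ p.support, min (s 0) (s 2) = 0) (h : Phi p = 0) : p = 0 := by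
  by_contra hp
  obtain ⟨s0, hs0⟩ := (support_nonempty.mpr hp).exists_mem
  have : coeff (Emap s0) (Phi p) = coeff s0 p := by
    rw [Phi_as_sum, coeff_sum]
    rw [Finset.sum_eq_single s0]
    · rw [coeff_monomial, if_pos rfl]
    · intro s hs hne
      rw [coeff_monomial, if_neg]
      intro he
      exact hne (Emap_injOn (hfree s hs) (hfree s0 hs0) he)
    · intro h'; exact absurd hs0 h'
  rw [h] at this
  exact (mem_support_iff.mp hs0) this.symm


/-- normal form of an exponent: remove xz pairs, add yw pairs -/
noncomputable def nf (s : Fin 4 →₀ ℕ) : Fin 4 →₀ ℕ :=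
  vec4 (s 0 - min (s 0) (s 2)) (s 1 + min (s 0) (s 2))
    (s 2 - min (s 0) (s 2)) (s 3 + min (s 0) (s 2))

lemma nf_apply (s : Fin 4 →₀ ℕ) :
    nf s 0 = s 0 - min (s 0) (s 2) ∧ nf s 1 = s 1 + min (s 0) (s 2) ∧
    nf s 2 = s 2 - min (s 0) (s 2) ∧ nf s 3 = s 3 + min (s 0) (s 2) := by
  refine ⟨?_, ?_, ?_, ?_⟩ <;> simp [nf, vec4_apply]

lemma nf_free (s : Fin 4 →₀ ℕ) : min (nf s 0) (nf s 2) = 0 := by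
  obtain ⟨h0, h1, h2, h3⟩ := nf_apply s
  rw [h0, h2]
  omega

lemma Emap_nf (s : Fin 4 →₀ ℕ) : Emap (nf s) = Emap s := by
  obtain ⟨h0, h1, h2, h3⟩ := nf_apply s
  simp only [Emap, h0, h1, h2, h3]
  have e1 : s 0 - min (s 0) (s 2) + (s 1 + min (s 0) (s 2)) = s 0 + s 1 := by omega
  have e2 : s 2 - min (s 0) (s 2) + (s 3 + min (s 0) (s 2)) = s 2 + s 3 := by omega
  have e3 : s 0 - min (s 0) (s 2) + (s 3 + min (s 0) (s 2)) = s 0 + s 3 := by omega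
  have e4 : s 1 + min (s 0) (s 2) + (s 2 - min (s 0) (s 2)) = s 1 + s 2 := by omega
  rw [e1, e2, e3, e4]

lemma pow_diff_mem (A B Cc D mu : ℕ) (hA : mu ≤ A) (hC : mu ≤ Cc) (c : k) :
    (C c * X 0 ^ A * X 1 ^ B * X 2 ^ Cc * X 3 ^ D : MvPolynomial (Fin 4) k)
      - C c * X 0 ^ (A - mu) * X 1 ^ (B + mu) * X 2 ^ (Cc - mu) * X 3 ^ (D + mu)
      ∈ Ideal.span {(X 0 * X 2 - X 1 * X 3 : MvPolynomial (Fin 4) k)} := by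
  rw [Ideal.mem_span_singleton]
  obtain ⟨h, hh⟩ := sub_dvd_pow_sub_pow (X 0 * X 2 : MvPolynomial (Fin 4) k) (X 1 * X 3) mu
  refine ⟨C c * X 0 ^ (A - mu) * X 1 ^ B * X 2 ^ (Cc - mu) * X 3 ^ D * h, ?_⟩
  have e1 : A = (A - mu) + mu := by omega
  have e2 : Cc = (Cc - mu) + mu := by omega
  calc (C c * X 0 ^ A * X 1 ^ B * X 2 ^ Cc * X 3 ^ D : MvPolynomial (Fin 4) k)
        - C c * X 0 ^ (A - mu) * X 1 ^ (B + mu) * X 2 ^ (Cc - mu) * X 3 ^ (D + mu)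
      = C c * X 0 ^ ((A - mu) + mu) * X 1 ^ B * X 2 ^ ((Cc - mu) + mu) * X 3 ^ D
        - C c * X 0 ^ (A - mu) * X 1 ^ (B + mu) * X 2 ^ (Cc - mu) * X 3 ^ (D + mu) := by
        rw [← e1, ← e2]
    _ = C c * X 0 ^ (A - mu) * X 1 ^ B * X 2 ^ (Cc - mu) * X 3 ^ D
          * ((X 0 * X 2) ^ mu - (X 1 * X 3) ^ mu) := by
        rw [pow_add, pow_add, pow_add (X 1), pow_add (X 3), mul_pow, mul_pow]
        ring
    _ = _ := by rw [hh]; ring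

lemma monomial_sub_nf_mem (s : Fin 4 →₀ ℕ) (c : k) :
    (monomial s c : MvPolynomial (Fin 4) k) - monomial (nf s) c
      ∈ Ideal.span {(X 0 * X 2 - X 1 * X 3 : MvPolynomial (Fin 4) k)} := by
  have h1 : (monomial s c : MvPolynomial (Fin 4) k)
      = C c * X 0 ^ (s 0) * X 1 ^ (s 1) * X 2 ^ (s 2) * X 3 ^ (s 3) := by
    conv_lhs => rw [vec4_eq s]
    exact mono4 _ _ _ _ _
  have h2 : (monomial (nf s) c : MvPolynomial (Fin 4) k)
      = C c * X 0 ^ (s 0 - min (s 0) (s 2)) * X 1 ^ (s 1 + min (s 0) (s 2))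
        * X 2 ^ (s 2 - min (s 0) (s 2)) * X 3 ^ (s 3 + min (s 0) (s 2)) := by
    rw [nf]; exact mono4 _ _ _ _ _
  rw [h1, h2]
  exact pow_diff_mem _ _ _ _ _ (Nat.min_le_left _ _) (Nat.min_le_right _ _) c

lemma Phi_q : Phi (X 0 * X 2 - X 1 * X 3 : MvPolynomial (Fin 4) k) = 0 := by
  simp only [Phi, map_sub, map_mul, aeval_X]
  simp only [Matrix.cons_val_zero, Matrix.cons_val_one, Matrix.head_cons,
    Matrix.cons_val_two, Matrix.tail_cons, Matrix.cons_val_three]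
  ring

/-- kernel of Phi is contained in (q) -/
lemma Phi_ker {p : MvPolynomial (Fin 4) k} (h : Phi p = 0) :
    p ∈ Ideal.span {(X 0 * X 2 - X 1 * X 3 : MvPolynomial (Fin 4) k)} := by
  set r : MvPolynomial (Fin 4) k := ∑ s ∈ p.support, monomial (nf s) (coeff s p) with hr
  have hsub : p - r ∈
      Ideal.span {(X 0 * X 2 - X 1 * X 3 : MvPolynomial (Fin 4) k)} := by
    have hd : p - r = ∑ s ∈ p.support,
        ((monomial s (coeff s p) : MvPolynomial (Fin 4) k)
          - monomial (nf s) (coeff s p)) := by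
      rw [Finset.sum_sub_distrib, ← p.as_sum]
    rw [hd]
    exact Ideal.sum_mem _ fun s _ => monomial_sub_nf_mem s _
  have hPhir : Phi r = 0 := by
    have h2 : Phi (p - r) = 0 := by
      obtain ⟨h', hh'⟩ := Ideal.mem_span_singleton.mp hsub
      rw [hh', map_mul, Phi_q, zero_mul]
    rw [map_sub, h, zero_sub, neg_eq_zero] at h2
    exact h2
  have hr0 : r = 0 := by
    apply Phi_inj _ hPhir
    intro t ht
    have hct : coeff t r ≠ 0 := mem_support_iff.mp ht
    rw [hr, coeff_sum] at hct
    obtain ⟨s, _, hs⟩ : ∃ s ∈ p.support, coeff t (monomial (nf s) (coeff s p)) ≠ 0 := by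
      by_contra hc
      push_neg at hc
      exact hct (Finset.sum_eq_zero hc)
    rw [coeff_monomial] at hs
    by_cases he : nf s = t
    · rw [← he]; exact nf_free s
    · rw [if_neg he] at hs; exact absurd rfl hs
  have h3 := hsub
  rwa [hr0, sub_zero] at h3


lemma pair_pow_mem {R : Type*} [CommRing R] (u v : R) (a b n : ℕ) (h : n ≤ a + b) :
    u ^ a * v ^ b ∈ (Ideal.span {u, v}) ^ n := by
  have hu : u ^ a ∈ (Ideal.span {u, v}) ^ a :=
    Ideal.pow_mem_pow (Ideal.subset_span (by simp)) a
  have hv : v ^ b ∈ (Ideal.span {u, v}) ^ b :=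
    Ideal.pow_mem_pow (Ideal.subset_span (by simp)) b
  have := Ideal.mul_mem_mul hu hv
  rw [← pow_add] at this
  exact Ideal.pow_le_pow_right h this

lemma K_coeff {n1 n2 : ℕ} {p : MvPolynomial (Fin 4) k}
    (hp : p ∈ Ideal.span {(X 0 ^ n1 : MvPolynomial (Fin 4) k), X 1 ^ n2})
    (t : Fin 4 →₀ ℕ) (h0 : t 0 < n1) (h1 : t 1 < n2) : coeff t p = 0 := by
  obtain ⟨u, v, huv⟩ := Ideal.mem_span_pair.mp hp
  rw [← huv, coeff_add]
  have hz1 : coeff t (u * X 0 ^ n1) = 0 := by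
    by_contra hc
    have ht := support_mul u (X 0 ^ n1) (mem_support_iff.mpr hc)
    rw [support_X_pow] at ht
    obtain ⟨a, _, b, hb, hab⟩ := Finset.mem_add.mp ht
    rw [Finset.mem_singleton] at hb
    subst hb
    have : t 0 = a 0 + n1 := by rw [← hab]; simp
    omega
  have hz2 : coeff t (v * X 1 ^ n2) = 0 := by
    by_contra hc
    have ht := support_mul v (X 1 ^ n2) (mem_support_iff.mpr hc)
    rw [support_X_pow] at ht
    obtain ⟨a, _, b, hb, hab⟩ := Finset.mem_add.mp ht
    rw [Finset.mem_singleton] at hb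
    subst hb
    have : t 1 = a 1 + n2 := by rw [← hab]; simp
    omega
  rw [hz1, hz2, add_zero]

lemma Phi_X0 : Phi (X 0 : MvPolynomial (Fin 4) k) = X 0 * X 2 := by
  rw [Phi, aeval_X]; rfl
lemma Phi_X1 : Phi (X 1 : MvPolynomial (Fin 4) k) = X 0 * X 3 := by
  rw [Phi, aeval_X]; rfl
lemma Phi_X2 : Phi (X 2 : MvPolynomial (Fin 4) k) = X 1 * X 3 := by
  rw [Phi, aeval_X]; rfl
lemma Phi_X3 : Phi (X 3 : MvPolynomial (Fin 4) k) = X 1 * X 2 := by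
  rw [Phi, aeval_X]; rfl

lemma Phi_I_mem {n1 n2 : ℕ} {I : Ideal (MvPolynomial (Fin 4) k)}
    (hI : I = (Ideal.span {X 0, X 1}) ^ n1 + (Ideal.span {X 2, X 3}) ^ n2
        + Ideal.span {X 0 * X 2 - X 1 * X 3})
    {p : MvPolynomial (Fin 4) k} (hp : p ∈ I) :
    Phi p ∈ Ideal.span {(X 0 ^ n1 : MvPolynomial (Fin 4) k), X 1 ^ n2} := by
  rw [hI, Ideal.add_eq_sup, Ideal.add_eq_sup] at hp
  obtain ⟨p12, hp12, p3, hp3, rfl⟩ := Submodule.mem_sup.mp hp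
  obtain ⟨p1, hp1, p2, hp2, rfl⟩ := Submodule.mem_sup.mp hp12
  rw [map_add, map_add]
  have h1 : Phi p1 ∈ Ideal.span {(X 0 ^ n1 : MvPolynomial (Fin 4) k), X 1 ^ n2} := by
    have hm : Phi p1 ∈ Ideal.map Phi ((Ideal.span {(X 0 : MvPolynomial (Fin 4) k), X 1}) ^ n1) :=
      Ideal.mem_map_of_mem _ hp1
    rw [Ideal.map_pow, Ideal.map_span, Set.image_pair, Phi_X0, Phi_X1] at hm
    have hle : Ideal.span {(X 0 * X 2 : MvPolynomial (Fin 4) k), X 0 * X 3}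
        ≤ Ideal.span {(X 0 : MvPolynomial (Fin 4) k)} := by
      rw [Ideal.span_le]
      rintro x (rfl | rfl) <;>
        exact Ideal.mem_span_singleton.mpr ⟨_, rfl⟩
    have := Ideal.pow_right_mono hle n1 hm
    rw [Ideal.span_singleton_pow] at this
    exact Ideal.span_mono (by simp) this
  have h2 : Phi p2 ∈ Ideal.span {(X 0 ^ n1 : MvPolynomial (Fin 4) k), X 1 ^ n2} := by
    have hm : Phi p2 ∈ Ideal.map Phi ((Ideal.span {(X 2 : MvPolynomial (Fin 4) k), X 3}) ^ n2) :=
      Ideal.mem_map_of_mem _ hp2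
    rw [Ideal.map_pow, Ideal.map_span, Set.image_pair, Phi_X2, Phi_X3] at hm
    have hle : Ideal.span {(X 1 * X 3 : MvPolynomial (Fin 4) k), X 1 * X 2}
        ≤ Ideal.span {(X 1 : MvPolynomial (Fin 4) k)} := by
      rw [Ideal.span_le]
      rintro x (rfl | rfl) <;>
        exact Ideal.mem_span_singleton.mpr ⟨_, rfl⟩
    have := Ideal.pow_right_mono hle n2 hm
    rw [Ideal.span_singleton_pow] at this
    exact Ideal.span_mono (by simp) this
  have h3 : Phi p3 = 0 := by
    obtain ⟨h', hh'⟩ := Ideal.mem_span_singleton.mp hp3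
    rw [hh', map_mul, Phi_q, zero_mul]
  rw [h3, add_zero]
  exact Ideal.add_mem _ h1 h2

lemma chain (vp vq : Fin 4) (hne : vp ≠ vq) (N δ : ℕ) (hδ : δ + 2 ≤ N)
    (G : ℕ → MvPolynomial (Fin 4) k)
    (hsupp : ∀ t ∈ (G 0).support, t vq ≤ δ)
    (hrel : ∀ a, 1 ≤ a → a ≤ N → X vq * G a = X vp * G (a - 1)) :
    ∀ a, a ≤ N → G a = 0 := by
  have tel : ∀ t, t ≤ N → X vq ^ t * G t = X vp ^ t * G 0 := by
    intro t
    induction t with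
    | zero => intro _; simp
    | succ t ih =>
      intro ht
      have h1 : X vq ^ (t + 1) * G (t + 1) = X vq ^ t * (X vq * G (t + 1)) := by ring
      rw [h1, hrel (t + 1) (by omega) ht, Nat.add_sub_cancel]
      calc X vq ^ t * (X vp * G t) = X vp * (X vq ^ t * G t) := by ring
        _ = X vp * (X vp ^ t * G 0) := by rw [ih (by omega)]
        _ = X vp ^ (t + 1) * G 0 := by ring
  have h0 : G 0 = 0 := by
    by_contra hG0
    have hPne : (X vp ^ N * G 0 : MvPolynomial (Fin 4) k) ≠ 0 :=
      mul_ne_zero (pow_ne_zero _ (X_ne_zero _)) hG0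
    obtain ⟨t, ht⟩ := (support_nonempty.mpr hPne).exists_mem
    have htq_le : t vq ≤ δ := by
      have hsub := support_mul (X vp ^ N) (G 0) ht
      rw [support_X_pow] at hsub
      obtain ⟨a, ha, b, hb, hab⟩ := Finset.mem_add.mp hsub
      rw [Finset.mem_singleton] at ha
      subst ha
      have : t vq = b vq := by
        rw [← hab]; simp [Finsupp.single_apply, hne]
      rw [this]
      exact hsupp b hb
    have htq_ge : N ≤ t vq := by
      have ht' : t ∈ (X vq ^ N * G N).support := by rw [tel N le_rfl]; exact ht
      have hsub := support_mul (X vq ^ N) (G N) ht'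
      rw [support_X_pow] at hsub
      obtain ⟨a, ha, b, _, hab⟩ := Finset.mem_add.mp hsub
      rw [Finset.mem_singleton] at ha
      subst ha
      have : t vq = N + b vq := by rw [← hab]; simp
      omega
    omega
  intro a
  induction a with
  | zero => intro _; exact h0
  | succ a ih =>
    intro ha
    have hr := hrel (a + 1) (by omega) ha
    rw [Nat.add_sub_cancel, ih (by omega), mul_zero] at hr
    rcases mul_eq_zero.mp hr with h | h
    · exact absurd h (X_ne_zero _)
    · exact h

lemma homog_support {p : MvPolynomial (Fin 4) k} {δ : ℕ} (hp : p.IsHomogeneous δ)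
    {s : Fin 4 →₀ ℕ} (hs : s ∈ p.support) : s 0 + s 1 + s 2 + s 3 = δ := by
  have h := mem_support_iff.mp hs
  have hdeg : s.degree = δ := by
    by_contra hc; exact h (hp.coeff_eq_zero hc)
  have h2 : Finsupp.degree s = ∑ i : Fin 4, s i := by
    refine Finset.sum_subset (Finset.subset_univ _) fun i _ hi => ?_
    exact Finsupp.notMem_support_iff.mp hi
  rw [h2, Fin.sum_univ_four] at hdeg
  exact hdeg


lemma coeff_filter (p : MvPolynomial (Fin 4) k) (P : (Fin 4 →₀ ℕ) → Prop)
    [DecidablePred P] (t : Fin 4 →₀ ℕ) :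
    coeff t (∑ s ∈ p.support.filter P, monomial s (coeff s p))
      = if P t then coeff t p else 0 := by
  rw [coeff_sum]
  simp_rw [coeff_monomial]
  rw [Finset.sum_ite_eq' (p.support.filter P) t (fun s => coeff s p)]
  by_cases hP : P t
  · by_cases hs : t ∈ p.support
    · rw [if_pos (Finset.mem_filter.mpr ⟨hs, hP⟩), if_pos hP]
    · rw [if_pos hP]
      rw [if_neg (fun hc => hs (Finset.mem_filter.mp hc).1)]
      exact (notMem_support_iff.mp hs).symm
  · rw [if_neg hP, if_neg (fun hc => hP (Finset.mem_filter.mp hc).2)]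

lemma core (n1 n2 δ : ℕ) (hδ : δ + 2 ≤ n1)
    (I : Ideal (MvPolynomial (Fin 4) k))
    (hI : I = (Ideal.span {X 0, X 1}) ^ n1 + (Ideal.span {X 2, X 3}) ^ n2
        + Ideal.span {X 0 * X 2 - X 1 * X 3})
    (g : ℕ → MvPolynomial (Fin 4) k)
    (hg : ∀ a, a ≤ n1 → (g a).IsHomogeneous δ)
    (hrel : ∀ a, 1 ≤ a → a ≤ n1 → X 1 * g a - X 0 * g (a - 1) ∈ I) :
    ∀ a, a ≤ n1 → g a ∈ I := by
  classical
  set g' : ℕ → MvPolynomial (Fin 4) k := fun a =>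
    ∑ s ∈ (g a).support.filter (fun s => s 2 + s 3 < n2), monomial s (coeff s (g a)) with hg'
  -- the removed part is in I
  have hdiff : ∀ a, g a - g' a ∈ I := by
    intro a
    have hg'a : g' a = ∑ s ∈ (g a).support.filter (fun s => s 2 + s 3 < n2),
        monomial s (coeff s (g a)) := rfl
    have hsplit : g a - g' a = ∑ s ∈ (g a).support.filter (fun s => ¬ (s 2 + s 3 < n2)),
        monomial s (coeff s (g a)) := by
      have h2 := Finset.sum_filter_add_sum_filter_not (g a).support
        (fun s => s 2 + s 3 < n2) (fun s => (monomial s (coeff s (g a)) : MvPolynomial (Fin 4) k))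
      rw [sub_eq_iff_eq_add', hg'a]
      conv_lhs => rw [(g a).as_sum]
      exact h2.symm
    rw [hsplit]
    refine Ideal.sum_mem _ fun s hs => ?_
    obtain ⟨hssup, hcond⟩ := Finset.mem_filter.mp hs
    have hn2 : n2 ≤ s 2 + s 3 := by omega
    set c := coeff s (g a) with hc
    have hmono : (monomial s c : MvPolynomial (Fin 4) k)
        = (C c * X 0 ^ s 0 * X 1 ^ s 1) * (X 2 ^ s 2 * X 3 ^ s 3) := by
      conv_lhs => rw [vec4_eq s]
      rw [mono4]
      ring
    have hmem : (monomial s c : MvPolynomial (Fin 4) k)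
        ∈ (Ideal.span {(X 2 : MvPolynomial (Fin 4) k), X 3}) ^ n2 := by
      rw [hmono]
      exact Ideal.mul_mem_left _ _ (pair_pow_mem _ _ _ _ _ hn2)
    rw [hI, Ideal.add_eq_sup, Ideal.add_eq_sup]
    exact Ideal.mem_sup_left (Ideal.mem_sup_right hmem)
  have hrel' : ∀ a, 1 ≤ a → a ≤ n1 → X 1 * g' a - X 0 * g' (a - 1) ∈ I := by
    intro a h1a han
    have e : X 1 * g' a - X 0 * g' (a - 1)
        = (X 1 * g a - X 0 * g (a - 1)) - X 1 * (g a - g' a) + X 0 * (g (a - 1) - g' (a - 1)) := by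
      ring
    rw [e]
    exact Ideal.add_mem _ (Ideal.sub_mem _ (hrel a h1a han)
      (Ideal.mul_mem_left _ _ (hdiff a))) (Ideal.mul_mem_left _ _ (hdiff (a - 1)))
  -- support bounds for Phi (g' a)
  have hGsup : ∀ a, a ≤ n1 → ∀ t ∈ (Phi (g' a)).support,
      t 0 ≤ δ ∧ t 1 < n2 ∧ t 3 ≤ δ := by
    intro a ha t ht
    obtain ⟨s, hs, rfl⟩ := Phi_coeff_ne_zero (mem_support_iff.mp ht)
    have hcs : coeff s (g' a) ≠ 0 := mem_support_iff.mp hs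
    rw [hg', coeff_filter] at hcs
    by_cases hP : s 2 + s 3 < n2
    · rw [if_pos hP] at hcs
      have hsup : s ∈ (g a).support := mem_support_iff.mpr hcs
      have hsum := homog_support (hg a ha) hsup
      obtain ⟨e0, e1, _, e3⟩ := Emap_apply s
      refine ⟨by omega, by omega, by omega⟩
    · rw [if_neg hP] at hcs
      exact absurd rfl hcs
  -- the relations become exact equalities after Phi
  have hGrel : ∀ a, 1 ≤ a → a ≤ n1 → X 3 * Phi (g' a) = X 2 * Phi (g' (a - 1)) := by
    intro a h1a han
    have hk := Phi_I_mem hI (hrel' a h1a han)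
    rw [map_sub, map_mul, map_mul, Phi_X1, Phi_X0] at hk
    have hz : (X 0 * X 3) * Phi (g' a) - (X 0 * X 2) * Phi (g' (a - 1)) = 0 := by
      apply MvPolynomial.ext
      intro t
      rw [coeff_zero]
      by_cases hsmall : t 0 < n1 ∧ t 1 < n2
      · exact K_coeff hk t hsmall.1 hsmall.2
      · by_contra hc
        have htm : t ∈ ((X 0 * X 3) * Phi (g' a) - (X 0 * X 2) * Phi (g' (a - 1))).support :=
          mem_support_iff.mpr hc
        have hun := (support_sub _ _ _) htm
        have hbound : t 0 ≤ δ + 1 ∧ t 1 < n2 := by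
          rcases Finset.mem_union.mp hun with h | h
          · have hsub := support_mul (X 0 * X 3) (Phi (g' a)) h
            have hX : ((X 0 : MvPolynomial (Fin 4) k) * X 3).support ⊆ {vec4 1 0 0 1} := by
              have : (X 0 : MvPolynomial (Fin 4) k) * X 3 = monomial (vec4 1 0 0 1) 1 := by
                rw [mono4]; simp
              rw [this]
              exact support_monomial_subset
            obtain ⟨u, hu, b, hb, hab⟩ := Finset.mem_add.mp hsub
            have hu' := hX hu
            rw [Finset.mem_singleton] at hu'
            subst hu'
            obtain ⟨b0, b1, _⟩ := hGsup a han b hb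
            have ht0 : t 0 = 1 + b 0 := by rw [← hab]; simp [vec4_apply]
            have ht1 : t 1 = 0 + b 1 := by rw [← hab]; simp [vec4_apply]
            omega
          · have hsub := support_mul (X 0 * X 2) (Phi (g' (a - 1))) h
            have hX : ((X 0 : MvPolynomial (Fin 4) k) * X 2).support ⊆ {vec4 1 0 1 0} := by
              have : (X 0 : MvPolynomial (Fin 4) k) * X 2 = monomial (vec4 1 0 1 0) 1 := by
                rw [mono4]; simp
              rw [this]
              exact support_monomial_subset
            obtain ⟨u, hu, b, hb, hab⟩ := Finset.mem_add.mp hsub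
            have hu' := hX hu
            rw [Finset.mem_singleton] at hu'
            subst hu'
            obtain ⟨b0, b1, _⟩ := hGsup (a - 1) (by omega) b hb
            have ht0 : t 0 = 1 + b 0 := by rw [← hab]; simp [vec4_apply]
            have ht1 : t 1 = 0 + b 1 := by rw [← hab]; simp [vec4_apply]
            omega
        exact hsmall ⟨by omega, hbound.2⟩
    have hz' : X 0 * (X 3 * Phi (g' a)) = X 0 * (X 2 * Phi (g' (a - 1))) := by
      have := sub_eq_zero.mp hz
      rw [mul_assoc, mul_assoc] at this
      exact this
    exact mul_left_cancel₀ (X_ne_zero 0) hz'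
  have hchain := chain 2 3 (by decide) n1 δ hδ (fun a => Phi (g' a))
    (fun t ht => (hGsup 0 (by omega) t ht).2.2) hGrel
  intro a ha
  have hg'I : g' a ∈ I := by
    have h0 : Phi (g' a) = 0 := hchain a ha
    have hker := Phi_ker h0
    rw [hI, Ideal.add_eq_sup, Ideal.add_eq_sup]
    exact Ideal.mem_sup_right hker
  have := Ideal.add_mem _ (hdiff a) hg'I
  simpa using this


lemma degree_four (s : Fin 4 →₀ ℕ) : s.degree = s 0 + s 1 + s 2 + s 3 := by
  have h2 : Finsupp.degree s = ∑ i : Fin 4, s i := by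
    refine Finset.sum_subset (Finset.subset_univ _) fun i _ hi => ?_
    exact Finsupp.notMem_support_iff.mp hi
  rw [h2, Fin.sum_univ_four]

lemma homog_XY (a b : ℕ) : ((X 0 : MvPolynomial (Fin 4) k) ^ a * X 1 ^ b).IsHomogeneous (a + b) := by
  have h : (X 0 : MvPolynomial (Fin 4) k) ^ a * X 1 ^ b = monomial (vec4 a b 0 0) 1 := by
    rw [mono4]; simp
  rw [h]
  exact isHomogeneous_monomial _ (by rw [degree_four]; simp [vec4_apply])

lemma homog_ZW (a b : ℕ) : ((X 2 : MvPolynomial (Fin 4) k) ^ a * X 3 ^ b).IsHomogeneous (a + b) := by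
  have h : (X 2 : MvPolynomial (Fin 4) k) ^ a * X 3 ^ b = monomial (vec4 0 0 a b) 1 := by
    rw [mono4]; simp
  rw [h]
  exact isHomogeneous_monomial _ (by rw [degree_four]; simp [vec4_apply])

lemma homog_q : ((X 0 : MvPolynomial (Fin 4) k) * X 2 - X 1 * X 3).IsHomogeneous 2 := by
  have h1 : ((X 0 : MvPolynomial (Fin 4) k) * X 2).IsHomogeneous 2 :=
    (isHomogeneous_X k 0).mul (isHomogeneous_X k 2)
  have h2 : ((X 1 : MvPolynomial (Fin 4) k) * X 3).IsHomogeneous 2 :=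
    (isHomogeneous_X k 1).mul (isHomogeneous_X k 3)
  exact h1.sub h2

/-- the swap x ↔ z, y ↔ w -/
def swapf : Fin 4 → Fin 4 := ![2, 3, 0, 1]

lemma swapf_swapf (i : Fin 4) : swapf (swapf i) = i := by fin_cases i <;> rfl

lemma tau_tau (p : MvPolynomial (Fin 4) k) : rename swapf (rename swapf p) = p := by
  rw [rename_rename]
  have h : swapf ∘ swapf = id := funext swapf_swapf
  rw [h, rename_id, AlgHom.id_apply]

lemma tau_mem {n1 n2 : ℕ} {p : MvPolynomial (Fin 4) k}
    (hp : p ∈ (Ideal.span {X 0, X 1}) ^ n1 + (Ideal.span {X 2, X 3}) ^ n2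
        + Ideal.span {X 0 * X 2 - X 1 * X 3}) :
    rename swapf p ∈ (Ideal.span {X 0, X 1}) ^ n2 + (Ideal.span {X 2, X 3}) ^ n1
        + Ideal.span {X 0 * X 2 - X 1 * X 3} := by
  rw [Ideal.add_eq_sup, Ideal.add_eq_sup] at hp ⊢
  obtain ⟨p12, hp12, p3, hp3, rfl⟩ := Submodule.mem_sup.mp hp
  obtain ⟨p1, hp1, p2, hp2, rfl⟩ := Submodule.mem_sup.mp hp12
  rw [map_add, map_add]
  have hrX : ∀ i : Fin 4, rename swapf (X i : MvPolynomial (Fin 4) k) = X (swapf i) :=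
    fun i => rename_X _ i
  refine Ideal.add_mem _ (Ideal.add_mem _ ?_ ?_) ?_
  · apply Ideal.mem_sup_left
    apply Ideal.mem_sup_right
    have hm : rename swapf p1 ∈ Ideal.map (rename swapf : MvPolynomial (Fin 4) k →ₐ[k] _)
        ((Ideal.span {(X 0 : MvPolynomial (Fin 4) k), X 1}) ^ n1) :=
      Ideal.mem_map_of_mem _ hp1
    rw [Ideal.map_pow, Ideal.map_span, Set.image_pair] at hm
    have e0 : (rename swapf) (X 0 : MvPolynomial (Fin 4) k) = X 2 := hrX 0
    have e1 : (rename swapf) (X 1 : MvPolynomial (Fin 4) k) = X 3 := hrX 1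
    rw [e0, e1] at hm
    exact hm
  · apply Ideal.mem_sup_left
    apply Ideal.mem_sup_left
    have hm : rename swapf p2 ∈ Ideal.map (rename swapf : MvPolynomial (Fin 4) k →ₐ[k] _)
        ((Ideal.span {(X 2 : MvPolynomial (Fin 4) k), X 3}) ^ n2) :=
      Ideal.mem_map_of_mem _ hp2
    rw [Ideal.map_pow, Ideal.map_span, Set.image_pair] at hm
    have e2 : (rename swapf) (X 2 : MvPolynomial (Fin 4) k) = X 0 := hrX 2
    have e3 : (rename swapf) (X 3 : MvPolynomial (Fin 4) k) = X 1 := hrX 3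
    rw [e2, e3] at hm
    exact hm
  · apply Ideal.mem_sup_right
    obtain ⟨h, hh⟩ := Ideal.mem_span_singleton.mp hp3
    rw [hh, map_mul]
    apply Ideal.mul_mem_right
    rw [Ideal.mem_span_singleton]
    refine ⟨1, ?_⟩
    rw [map_sub, map_mul, map_mul, hrX 0, hrX 1, hrX 2, hrX 3]
    have s0 : swapf 0 = 2 := rfl
    have s1 : swapf 1 = 3 := rfl
    have s2 : swapf 2 = 0 := rfl
    have s3 : swapf 3 = 1 := rfl
    rw [s0, s1, s2, s3]
    ring

lemma core2 (n1 n2 δ : ℕ) (hδ : δ + 2 ≤ n2)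
    (I : Ideal (MvPolynomial (Fin 4) k))
    (hI : I = (Ideal.span {X 0, X 1}) ^ n1 + (Ideal.span {X 2, X 3}) ^ n2
        + Ideal.span {X 0 * X 2 - X 1 * X 3})
    (g : ℕ → MvPolynomial (Fin 4) k)
    (hg : ∀ a, a ≤ n2 → (g a).IsHomogeneous δ)
    (hrel : ∀ a, 1 ≤ a → a ≤ n2 → X 3 * g a - X 2 * g (a - 1) ∈ I) :
    ∀ a, a ≤ n2 → g a ∈ I := by
  have hcore := core n2 n1 δ hδ
    ((Ideal.span {X 0, X 1}) ^ n2 + (Ideal.span {X 2, X 3}) ^ n1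
        + Ideal.span {X 0 * X 2 - X 1 * X 3}) rfl
    (fun a => rename swapf (g a))
    (fun a ha => (hg a ha).rename_isHomogeneous)
    (by
      intro a h1a han
      have hm := tau_mem (hI ▸ hrel a h1a han)
      rw [map_sub, map_mul, map_mul, rename_X, rename_X] at hm
      have s2' : swapf 3 = 1 := rfl
      have s3' : swapf 2 = 0 := rfl
      rw [s2', s3'] at hm
      exact hm)
  intro a ha
  have h2 := tau_mem (hcore a ha)
  rw [tau_tau] at h2
  rw [hI]
  exact h2


lemma homog_zero {p : MvPolynomial (Fin 4) k} (hp : p.IsHomogeneous 0) :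
    p = C (coeff 0 p) := by
  apply MvPolynomial.ext
  intro t
  rw [coeff_C]
  by_cases ht : 0 = t
  · rw [if_pos ht, ← ht]
  · rw [if_neg ht]
    apply hp.coeff_eq_zero
    rw [Ne, Finsupp.degree_eq_zero_iff]
    exact fun h => ht (h ▸ rfl)

lemma coeff_var_mul_zero (i : Fin 4) {w : MvPolynomial (Fin 4) k}
    (hw : ∀ s ∈ w.support, 1 ≤ s i) (q : MvPolynomial (Fin 4) k)
    {t : Fin 4 →₀ ℕ} (ht : t i = 0) : coeff t (w * q) = 0 := by
  by_contra hc
  have hmem := support_mul w q (mem_support_iff.mpr hc)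
  obtain ⟨a, ha, b, _, hab⟩ := Finset.mem_add.mp hmem
  have : t i = a i + b i := by rw [← hab]; simp
  have := hw a ha
  omega

lemma mem_setpow_XY {n : ℕ} {p : MvPolynomial (Fin 4) k}
    (hp : p ∈ (({X 0, X 1} : Set (MvPolynomial (Fin 4) k)) ^ n)) :
    ∃ a, a ≤ n ∧ p = X 0 ^ a * X 1 ^ (n - a) := by
  induction n generalizing p with
  | zero =>
    rw [pow_zero, Set.mem_one] at hp
    exact ⟨0, le_rfl, by simp [hp]⟩
  | succ n ih =>
    rw [pow_succ, Set.mem_mul] at hp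
    obtain ⟨u, hu, v, hv, rfl⟩ := hp
    obtain ⟨a, ha, rfl⟩ := ih hu
    rcases hv with rfl | rfl
    · refine ⟨a + 1, by omega, ?_⟩
      have e : n + 1 - (a + 1) = n - a := by omega
      rw [e]; ring
    · refine ⟨a, by omega, ?_⟩
      have e : n + 1 - a = (n - a) + 1 := by omega
      rw [e, pow_succ]; ring

lemma mem_setpow_ZW {n : ℕ} {p : MvPolynomial (Fin 4) k}
    (hp : p ∈ (({X 2, X 3} : Set (MvPolynomial (Fin 4) k)) ^ n)) :
    ∃ a, a ≤ n ∧ p = X 2 ^ a * X 3 ^ (n - a) := by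
  induction n generalizing p with
  | zero =>
    rw [pow_zero, Set.mem_one] at hp
    exact ⟨0, le_rfl, by simp [hp]⟩
  | succ n ih =>
    rw [pow_succ, Set.mem_mul] at hp
    obtain ⟨u, hu, v, hv, rfl⟩ := hp
    obtain ⟨a, ha, rfl⟩ := ih hu
    rcases hv with rfl | rfl
    · refine ⟨a + 1, by omega, ?_⟩
      have e : n + 1 - (a + 1) = n - a := by omega
      rw [e]; ring
    · refine ⟨a, by omega, ?_⟩
      have e : n + 1 - a = (n - a) + 1 := by omega
      rw [e, pow_succ]; ring

end Stmt13Aux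

set_option maxHeartbeats 1600000 in
open Stmt13Aux in
theorem stmt13 (k : Type*) [Field k] [CharZero k] (n1 n2 : ℕ) (h1 : 2 ≤ n1) (h2 : 2 ≤ n2)
    (I : Ideal (MvPolynomial (Fin 4) k))
    (hI : I = (Ideal.span {X 0, X 1}) ^ n1 + (Ideal.span {X 2, X 3}) ^ n2
        + Ideal.span {X 0 * X 2 - X 1 * X 3})
    (φ : I →ₗ[MvPolynomial (Fin 4) k] (MvPolynomial (Fin 4) k ⧸ I))
    (j : ℕ) (hj : 2 ≤ j)
    (hgraded : ∀ (m : ℕ) (p : MvPolynomial (Fin 4) k) (hp : p ∈ I),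
      p.IsHomogeneous m →
        (j ≤ m → φ ⟨p, hp⟩ ∈ Ideal.Quotient.mk I ''
            ↑(homogeneousSubmodule (Fin 4) k (m - j))) ∧
        (m < j → φ ⟨p, hp⟩ = 0)) :
    φ = 0 := by
  classical
  have hq_mem : (X 0 * X 2 - X 1 * X 3 : MvPolynomial (Fin 4) k) ∈ I := by
    rw [hI, Ideal.add_eq_sup, Ideal.add_eq_sup]
    exact Ideal.mem_sup_right (Ideal.subset_span rfl)
  have hXY_mem : ∀ a b : ℕ, n1 ≤ a + b → (X 0 : MvPolynomial (Fin 4) k) ^ a * X 1 ^ b ∈ I := by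
    intro a b h
    rw [hI, Ideal.add_eq_sup, Ideal.add_eq_sup]
    exact Ideal.mem_sup_left (Ideal.mem_sup_left (pair_pow_mem _ _ _ _ _ h))
  have hZW_mem : ∀ a b : ℕ, n2 ≤ a + b → (X 2 : MvPolynomial (Fin 4) k) ^ a * X 3 ^ b ∈ I := by
    intro a b h
    rw [hI, Ideal.add_eq_sup, Ideal.add_eq_sup]
    exact Ideal.mem_sup_left (Ideal.mem_sup_right (pair_pow_mem _ _ _ _ _ h))
  have hsmul_eq : ∀ (r x : MvPolynomial (Fin 4) k) (hx : x ∈ I) (hrx : r * x ∈ I),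
      φ ⟨r * x, hrx⟩ = r • φ ⟨x, hx⟩ := by
    intro r x hx hrx
    have e : (⟨r * x, hrx⟩ : I) = r • ⟨x, hx⟩ := Subtype.ext (by simp [smul_eq_mul])
    rw [e, map_smul]
  have hmk_smul : ∀ (r x : MvPolynomial (Fin 4) k),
      r • Ideal.Quotient.mk I x = Ideal.Quotient.mk I (r * x) := fun r x => rfl
  -- family 1
  have fam1 : ∀ a, a ≤ n1 → ∀ (hm : (X 0 : MvPolynomial (Fin 4) k) ^ a * X 1 ^ (n1 - a) ∈ I),
      φ ⟨X 0 ^ a * X 1 ^ (n1 - a), hm⟩ = 0 := by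
    have hhom : ∀ a, a ≤ n1 →
        ((X 0 : MvPolynomial (Fin 4) k) ^ a * X 1 ^ (n1 - a)).IsHomogeneous n1 := by
      intro a ha
      have := homog_XY (k := k) a (n1 - a)
      rwa [show a + (n1 - a) = n1 by omega] at this
    rcases le_or_gt j n1 with hjn | hjn
    · have hex : ∀ a : ℕ, ∃ g : MvPolynomial (Fin 4) k, a ≤ n1 →
          (g.IsHomogeneous (n1 - j) ∧ Ideal.Quotient.mk I g
            = φ ⟨X 0 ^ a * X 1 ^ (n1 - a), hXY_mem a (n1 - a) (by omega)⟩) := by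
        intro a
        by_cases ha : a ≤ n1
        · obtain ⟨himg, _⟩ := hgraded n1 _ (hXY_mem a (n1 - a) (by omega)) (hhom a ha)
          obtain ⟨g, hg1, hg2⟩ := himg hjn
          exact ⟨g, fun _ => ⟨(mem_homogeneousSubmodule _ _).mp hg1, hg2⟩⟩
        · exact ⟨0, fun h => absurd h ha⟩
      choose g hgspec using hex
      have hrels : ∀ a, 1 ≤ a → a ≤ n1 → X 1 * g a - X 0 * g (a - 1) ∈ I := by
        intro a hone han
        obtain ⟨b, rfl⟩ : ∃ b, a = b + 1 := ⟨a - 1, by omega⟩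
        rw [Nat.add_sub_cancel]
        have hmem_a := hXY_mem (b + 1) (n1 - (b + 1)) (by omega)
        have hmem_b := hXY_mem b (n1 - b) (by omega)
        have e2 : n1 - b = (n1 - (b + 1)) + 1 := by omega
        have heq : (X 1 : MvPolynomial (Fin 4) k) * (X 0 ^ (b + 1) * X 1 ^ (n1 - (b + 1)))
            = X 0 * (X 0 ^ b * X 1 ^ (n1 - b)) := by
          rw [e2]; ring
        have hma : (X 1 : MvPolynomial (Fin 4) k)
            * (X 0 ^ (b + 1) * X 1 ^ (n1 - (b + 1))) ∈ I := Ideal.mul_mem_left _ _ hmem_a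
        have hmb : (X 0 : MvPolynomial (Fin 4) k) * (X 0 ^ b * X 1 ^ (n1 - b)) ∈ I :=
          Ideal.mul_mem_left _ _ hmem_b
        have hsub : (⟨X 1 * (X 0 ^ (b + 1) * X 1 ^ (n1 - (b + 1))), hma⟩ : I)
            = ⟨X 0 * (X 0 ^ b * X 1 ^ (n1 - b)), hmb⟩ := Subtype.ext heq
        have hval : (X 1 : MvPolynomial (Fin 4) k) • φ ⟨X 0 ^ (b + 1) * X 1 ^ (n1 - (b + 1)), hmem_a⟩
            = (X 0 : MvPolynomial (Fin 4) k) • φ ⟨X 0 ^ b * X 1 ^ (n1 - b), hmem_b⟩ := by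
          rw [← hsmul_eq _ _ hmem_a hma, ← hsmul_eq _ _ hmem_b hmb, hsub]
        rw [← (hgspec (b + 1) han).2, ← (hgspec b (by omega)).2, hmk_smul, hmk_smul] at hval
        exact Ideal.Quotient.eq.mp hval
      have hcore := core n1 n2 (n1 - j) (by omega) I hI g (fun a ha => (hgspec a ha).1) hrels
      intro a ha hm
      rw [← (hgspec a ha).2, Ideal.Quotient.eq_zero_iff_mem]
      exact hcore a ha
    · intro a ha hm
      exact (hgraded n1 _ hm (hhom a ha)).2 hjn
  -- family 2
  have fam2 : ∀ a, a ≤ n2 → ∀ (hm : (X 2 : MvPolynomial (Fin 4) k) ^ a * X 3 ^ (n2 - a) ∈ I),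
      φ ⟨X 2 ^ a * X 3 ^ (n2 - a), hm⟩ = 0 := by
    have hhom : ∀ a, a ≤ n2 →
        ((X 2 : MvPolynomial (Fin 4) k) ^ a * X 3 ^ (n2 - a)).IsHomogeneous n2 := by
      intro a ha
      have := homog_ZW (k := k) a (n2 - a)
      rwa [show a + (n2 - a) = n2 by omega] at this
    rcases le_or_gt j n2 with hjn | hjn
    · have hex : ∀ a : ℕ, ∃ g : MvPolynomial (Fin 4) k, a ≤ n2 →
          (g.IsHomogeneous (n2 - j) ∧ Ideal.Quotient.mk I g
            = φ ⟨X 2 ^ a * X 3 ^ (n2 - a), hZW_mem a (n2 - a) (by omega)⟩) := by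
        intro a
        by_cases ha : a ≤ n2
        · obtain ⟨himg, _⟩ := hgraded n2 _ (hZW_mem a (n2 - a) (by omega)) (hhom a ha)
          obtain ⟨g, hg1, hg2⟩ := himg hjn
          exact ⟨g, fun _ => ⟨(mem_homogeneousSubmodule _ _).mp hg1, hg2⟩⟩
        · exact ⟨0, fun h => absurd h ha⟩
      choose g hgspec using hex
      have hrels : ∀ a, 1 ≤ a → a ≤ n2 → X 3 * g a - X 2 * g (a - 1) ∈ I := by
        intro a hone han
        obtain ⟨b, rfl⟩ : ∃ b, a = b + 1 := ⟨a - 1, by omega⟩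
        rw [Nat.add_sub_cancel]
        have hmem_a := hZW_mem (b + 1) (n2 - (b + 1)) (by omega)
        have hmem_b := hZW_mem b (n2 - b) (by omega)
        have e2 : n2 - b = (n2 - (b + 1)) + 1 := by omega
        have heq : (X 3 : MvPolynomial (Fin 4) k) * (X 2 ^ (b + 1) * X 3 ^ (n2 - (b + 1)))
            = X 2 * (X 2 ^ b * X 3 ^ (n2 - b)) := by
          rw [e2]; ring
        have hma : (X 3 : MvPolynomial (Fin 4) k)
            * (X 2 ^ (b + 1) * X 3 ^ (n2 - (b + 1))) ∈ I := Ideal.mul_mem_left _ _ hmem_a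
        have hmb : (X 2 : MvPolynomial (Fin 4) k) * (X 2 ^ b * X 3 ^ (n2 - b)) ∈ I :=
          Ideal.mul_mem_left _ _ hmem_b
        have hsub : (⟨X 3 * (X 2 ^ (b + 1) * X 3 ^ (n2 - (b + 1))), hma⟩ : I)
            = ⟨X 2 * (X 2 ^ b * X 3 ^ (n2 - b)), hmb⟩ := Subtype.ext heq
        have hval : (X 3 : MvPolynomial (Fin 4) k) • φ ⟨X 2 ^ (b + 1) * X 3 ^ (n2 - (b + 1)), hmem_a⟩
            = (X 2 : MvPolynomial (Fin 4) k) • φ ⟨X 2 ^ b * X 3 ^ (n2 - b), hmem_b⟩ := by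
          rw [← hsmul_eq _ _ hmem_a hma, ← hsmul_eq _ _ hmem_b hmb, hsub]
        rw [← (hgspec (b + 1) han).2, ← (hgspec b (by omega)).2, hmk_smul, hmk_smul] at hval
        exact Ideal.Quotient.eq.mp hval
      have hcore := core2 n1 n2 (n2 - j) (by omega) I hI g (fun a ha => (hgspec a ha).1) hrels
      intro a ha hm
      rw [← (hgspec a ha).2, Ideal.Quotient.eq_zero_iff_mem]
      exact hcore a ha
    · intro a ha hm
      exact (hgraded n2 _ hm (hhom a ha)).2 hjn
  -- the quadric generator
  have famq : ∀ (hm : (X 0 * X 2 - X 1 * X 3 : MvPolynomial (Fin 4) k) ∈ I),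
      φ ⟨X 0 * X 2 - X 1 * X 3, hm⟩ = 0 := by
    intro hm
    rcases lt_or_ge 2 j with hj2 | hj2
    · exact (hgraded 2 _ hm homog_q).2 hj2
    · have hj2' : j = 2 := le_antisymm hj2 hj
      subst hj2'
      obtain ⟨himg, _⟩ := hgraded 2 _ hm homog_q
      obtain ⟨g0, hg01, hg02⟩ := himg le_rfl
      have hg0hom : g0.IsHomogeneous 0 := by
        have := (mem_homogeneousSubmodule _ _).mp hg01
        simpa using this
      have hgC : g0 = C (coeff 0 g0) := homog_zero hg0hom
      set c := coeff 0 g0 with hc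
      obtain ⟨m, rfl⟩ : ∃ m, n1 = m + 1 := ⟨n1 - 1, by omega⟩
      have hx1 : (X 0 : MvPolynomial (Fin 4) k) ^ (m + 1) * X 1 ^ 0 ∈ I :=
        hXY_mem (m + 1) 0 (by omega)
      have hx2 : (X 0 : MvPolynomial (Fin 4) k) ^ m * X 1 ^ 1 ∈ I := hXY_mem m 1 (by omega)
      have hsyz : (X 0 : MvPolynomial (Fin 4) k) ^ m * (X 0 * X 2 - X 1 * X 3)
          = X 2 * (X 0 ^ (m + 1) * X 1 ^ 0) - X 3 * (X 0 ^ m * X 1 ^ 1) := by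
        ring
      have hql : (X 0 : MvPolynomial (Fin 4) k) ^ m * (X 0 * X 2 - X 1 * X 3) ∈ I :=
        Ideal.mul_mem_left _ _ hm
      have hval : (X 0 : MvPolynomial (Fin 4) k) ^ m • φ ⟨X 0 * X 2 - X 1 * X 3, hm⟩
          = (X 2 : MvPolynomial (Fin 4) k) • φ ⟨X 0 ^ (m + 1) * X 1 ^ 0, hx1⟩ - (X 3 : MvPolynomial (Fin 4) k) • φ ⟨X 0 ^ m * X 1 ^ 1, hx2⟩ := by
        have hsplit : (⟨X 0 ^ m * (X 0 * X 2 - X 1 * X 3), hql⟩ : I)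
            = (X 2 : MvPolynomial (Fin 4) k) • (⟨X 0 ^ (m + 1) * X 1 ^ 0, hx1⟩ : I)
              - (X 3 : MvPolynomial (Fin 4) k) • (⟨X 0 ^ m * X 1 ^ 1, hx2⟩ : I) := by
          apply Subtype.ext
          simpa [smul_eq_mul] using hsyz
        calc (X 0 : MvPolynomial (Fin 4) k) ^ m • φ ⟨X 0 * X 2 - X 1 * X 3, hm⟩
            = φ ⟨X 0 ^ m * (X 0 * X 2 - X 1 * X 3), hql⟩ := (hsmul_eq _ _ hm hql).symm
          _ = _ := by rw [hsplit, map_sub, map_smul, map_smul]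
      obtain ⟨u, hu⟩ := Ideal.Quotient.mk_surjective (φ ⟨X 0 ^ (m + 1) * X 1 ^ 0, hx1⟩)
      obtain ⟨v, hv⟩ := Ideal.Quotient.mk_surjective (φ ⟨X 0 ^ m * X 1 ^ 1, hx2⟩)
      rw [← hg02, ← hu, ← hv, hmk_smul, hmk_smul, hmk_smul, ← map_sub] at hval
      have hdiff : (X 0 : MvPolynomial (Fin 4) k) ^ m * g0
          - (X 2 * u - X 3 * v) ∈ I := Ideal.Quotient.eq.mp hval
      have hK := Phi_I_mem hI hdiff
      simp only [map_sub, map_mul, map_pow, Phi_X0, Phi_X2, Phi_X3] at hK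
      set t : Fin 4 →₀ ℕ := vec4 m 0 m 0 with htdef
      have ht0 : t 0 = m := by simp [htdef, vec4_apply]
      have ht1 : t 1 = 0 := by simp [htdef, vec4_apply]
      have hco := K_coeff hK t (by omega) (by omega)
      have hterm1 : ((X 0 * X 2 : MvPolynomial (Fin 4) k)) ^ m * Phi g0
          = monomial t c := by
        rw [hgC]
        have hPc : Phi (C c) = (C c : MvPolynomial (Fin 4) k) := by
          rw [Phi, aeval_C, algebraMap_eq]
        rw [hPc, htdef, mono4, mul_pow]
        ring
      have hterm2 : coeff t ((X 1 * X 3 : MvPolynomial (Fin 4) k) * Phi u) = 0 := by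
        refine coeff_var_mul_zero 1 ?_ _ (by omega)
        intro s hs
        have hsub := support_mul (X 1 : MvPolynomial (Fin 4) k) (X 3) hs
        obtain ⟨a, ha, b, hb, hab⟩ := Finset.mem_add.mp hsub
        rw [support_X, Finset.mem_singleton] at ha
        subst ha
        rw [← hab]; simp
      have hterm3 : coeff t ((X 1 * X 2 : MvPolynomial (Fin 4) k) * Phi v) = 0 := by
        refine coeff_var_mul_zero 1 ?_ _ (by omega)
        intro s hs
        have hsub := support_mul (X 1 : MvPolynomial (Fin 4) k) (X 2) hs
        obtain ⟨a, ha, b, hb, hab⟩ := Finset.mem_add.mp hsub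
        rw [support_X, Finset.mem_singleton] at ha
        subst ha
        rw [← hab]; simp
      rw [coeff_sub, coeff_sub, hterm2, hterm3, hterm1, coeff_monomial, if_pos rfl] at hco
      have hc0 : c = 0 := by simpa using hco
      rw [← hg02, hgC, hc0, map_zero, map_zero]
  -- assembly
  have hA1le : (Ideal.span {(X 0 : MvPolynomial (Fin 4) k), X 1}) ^ n1 ≤ I := by
    rw [hI, Ideal.add_eq_sup, Ideal.add_eq_sup]
    exact le_sup_of_le_left le_sup_left
  have hA2le : (Ideal.span {(X 2 : MvPolynomial (Fin 4) k), X 3}) ^ n2 ≤ I := by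
    rw [hI, Ideal.add_eq_sup, Ideal.add_eq_sup]
    exact le_sup_of_le_left le_sup_right
  have hclaim1 : ∀ x ∈ (Ideal.span {(X 0 : MvPolynomial (Fin 4) k), X 1}) ^ n1,
      ∀ hx : x ∈ I, φ ⟨x, hx⟩ = 0 := by
    intro x hx
    have hx' : x ∈ Submodule.span (MvPolynomial (Fin 4) k)
        (({X 0, X 1} : Set (MvPolynomial (Fin 4) k)) ^ n1) := by
      rw [← Submodule.span_pow]
      exact hx
    have key : x ∈ I ∧ ∀ hx : x ∈ I, φ ⟨x, hx⟩ = 0 := by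
      refine Submodule.span_induction
        (p := fun y _ => y ∈ I ∧ ∀ hy : y ∈ I, φ ⟨y, hy⟩ = 0) ?_ ?_ ?_ ?_ hx'
      · intro y hy
        obtain ⟨a, ha, rfl⟩ := mem_setpow_XY hy
        exact ⟨hXY_mem a (n1 - a) (by omega), fam1 a ha⟩
      · refine ⟨zero_mem _, fun hy => ?_⟩
        have e : (⟨0, hy⟩ : I) = 0 := rfl
        rw [e, map_zero]
      · rintro y z hy hz ⟨hyI, hyv⟩ ⟨hzI, hzv⟩
        refine ⟨Ideal.add_mem _ hyI hzI, fun hw => ?_⟩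
        have e : (⟨y + z, hw⟩ : I) = ⟨y, hyI⟩ + ⟨z, hzI⟩ := Subtype.ext rfl
        rw [e, map_add, hyv hyI, hzv hzI, add_zero]
      · rintro r y hy ⟨hyI, hyv⟩
        refine ⟨Submodule.smul_mem _ r hyI, fun hw => ?_⟩
        have e : (⟨r • y, hw⟩ : I) = r • ⟨y, hyI⟩ := Subtype.ext rfl
        rw [e, map_smul, hyv hyI, smul_zero]
    exact key.2
  have hclaim2 : ∀ x ∈ (Ideal.span {(X 2 : MvPolynomial (Fin 4) k), X 3}) ^ n2,
      ∀ hx : x ∈ I, φ ⟨x, hx⟩ = 0 := by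
    intro x hx
    have hx' : x ∈ Submodule.span (MvPolynomial (Fin 4) k)
        (({X 2, X 3} : Set (MvPolynomial (Fin 4) k)) ^ n2) := by
      rw [← Submodule.span_pow]
      exact hx
    have key : x ∈ I ∧ ∀ hx : x ∈ I, φ ⟨x, hx⟩ = 0 := by
      refine Submodule.span_induction
        (p := fun y _ => y ∈ I ∧ ∀ hy : y ∈ I, φ ⟨y, hy⟩ = 0) ?_ ?_ ?_ ?_ hx'
      · intro y hy
        obtain ⟨a, ha, rfl⟩ := mem_setpow_ZW hy
        exact ⟨hZW_mem a (n2 - a) (by omega), fam2 a ha⟩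
      · refine ⟨zero_mem _, fun hy => ?_⟩
        have e : (⟨0, hy⟩ : I) = 0 := rfl
        rw [e, map_zero]
      · rintro y z hy hz ⟨hyI, hyv⟩ ⟨hzI, hzv⟩
        refine ⟨Ideal.add_mem _ hyI hzI, fun hw => ?_⟩
        have e : (⟨y + z, hw⟩ : I) = ⟨y, hyI⟩ + ⟨z, hzI⟩ := Subtype.ext rfl
        rw [e, map_add, hyv hyI, hzv hzI, add_zero]
      · rintro r y hy ⟨hyI, hyv⟩
        refine ⟨Submodule.smul_mem _ r hyI, fun hw => ?_⟩
        have e : (⟨r • y, hw⟩ : I) = r • ⟨y, hyI⟩ := Subtype.ext rfl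
        rw [e, map_smul, hyv hyI, smul_zero]
    exact key.2
  have hclaim3 : ∀ x ∈ Ideal.span {(X 0 * X 2 - X 1 * X 3 : MvPolynomial (Fin 4) k)},
      ∀ hx : x ∈ I, φ ⟨x, hx⟩ = 0 := by
    intro x hx hxI
    obtain ⟨h, hh⟩ := Ideal.mem_span_singleton.mp hx
    subst hh
    have hmem : h * (X 0 * X 2 - X 1 * X 3) ∈ I := Ideal.mul_mem_left _ _ hq_mem
    have e : (⟨(X 0 * X 2 - X 1 * X 3) * h, hxI⟩ : I)
        = ⟨h * (X 0 * X 2 - X 1 * X 3), hmem⟩ := Subtype.ext (mul_comm _ _)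
    rw [e, hsmul_eq h _ hq_mem hmem, famq hq_mem, smul_zero]
  have key : ∀ p (hp : p ∈ I), φ ⟨p, hp⟩ = 0 := by
    intro p hp
    have hp' := hp
    rw [hI, Ideal.add_eq_sup, Ideal.add_eq_sup] at hp'
    obtain ⟨p12, hp12, p3, hp3, hpeq⟩ := Submodule.mem_sup.mp hp'
    obtain ⟨p1, hp1, p2, hp2, hpeq2⟩ := Submodule.mem_sup.mp hp12
    have hp1I : p1 ∈ I := hA1le hp1
    have hp2I : p2 ∈ I := hA2le hp2
    have hp3I : p3 ∈ I := by
      rw [hI, Ideal.add_eq_sup, Ideal.add_eq_sup]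
      exact Ideal.mem_sup_right hp3
    have e : (⟨p, hp⟩ : I) = ⟨p1, hp1I⟩ + ⟨p2, hp2I⟩ + ⟨p3, hp3I⟩ := by
      apply Subtype.ext
      show p = p1 + p2 + p3
      rw [← hpeq, ← hpeq2]
    rw [e, map_add, map_add, hclaim1 p1 hp1 hp1I, hclaim2 p2 hp2 hp2I,
      hclaim3 p3 hp3 hp3I, add_zero, add_zero]
  refine LinearMap.ext fun x => ?_
  obtain ⟨p, hp⟩ := x
  rw [LinearMap.zero_apply]
  exact key p hp
end

section
/- Let $k$ be a field of characteristic 0, $S = k[x,y,z,w]$, $n_1, n_2 \ge 2$, $I = (x,y)^{n_1} + (z,w)^{n_2} + (xz-yw)$, and $A = S/I$. Every $S$-linear map $\varphi : I \to A$ of degree $-1$ is a $k$-linear combination of the four maps $f \mapsto \partial f/\partial x + I$, $f \mapsto \partial f/\partial y + I$, $f \mapsto \partial f/\partial z + I$, $f \mapsto \partial f/\partial w + I$. -/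
set_option maxHeartbeats 1000000

open MvPolynomial

namespace Stmt14Aux

section C
variable {R : Type*} [CommRing R]

lemma span_pair_pow (u v : R) (n : ℕ) :
    Ideal.span {u, v} ^ n = Ideal.span ((fun i => u ^ i * v ^ (n - i)) '' {i | i ≤ n}) := by
  induction n with
  | zero =>
    rw [pow_zero, Ideal.one_eq_top, eq_comm, Ideal.eq_top_iff_one]
    exact Ideal.subset_span ⟨0, by simp⟩
  | succ n ih =>
    rw [pow_succ, ih]
    apply le_antisymm
    · rw [Ideal.span_mul_span', Ideal.span_le]
      rintro x ⟨y, ⟨i, hi, rfl⟩, z, hz, rfl⟩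
      simp only [Set.mem_setOf_eq] at hi
      simp only [Set.mem_insert_iff, Set.mem_singleton_iff] at hz
      dsimp only
      rcases hz with h | h
      · have : u ^ i * v ^ (n - i) * z = u ^ (i+1) * v ^ ((n+1) - (i+1)) := by
          rw [h, show (n+1) - (i+1) = n - i by omega]; ring
        rw [this]
        exact Ideal.subset_span ⟨i+1, by simpa using hi, rfl⟩
      · have : u ^ i * v ^ (n - i) * z = u ^ i * v ^ ((n+1) - i) := by
          rw [h, show (n+1) - i = (n - i) + 1 by omega]; ring
        rw [this]
        exact Ideal.subset_span ⟨i, by simp; omega, rfl⟩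
    · rw [Ideal.span_le]
      rintro x ⟨i, hi, rfl⟩
      simp only [Set.mem_setOf_eq] at hi
      dsimp only [SetLike.mem_coe]
      rcases Nat.eq_or_lt_of_le hi with heq | hlt
      · have : u ^ i * v ^ (n + 1 - i) = u ^ (i-1) * v ^ (n - (i-1)) * u := by
          rw [show n + 1 - i = 0 by omega, show n - (i-1) = 0 by omega,
            show i = (i-1)+1 by omega]
          ring_nf
          rw [show 1 + (i - 1) - 1 = i - 1 by omega]
        rw [this]
        exact Ideal.mul_mem_mul (Ideal.subset_span ⟨i-1, by simp; omega, rfl⟩)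
          (Ideal.subset_span (by simp))
      · have : u ^ i * v ^ (n + 1 - i) = u ^ i * v ^ (n - i) * v := by
          rw [show n + 1 - i = (n - i) + 1 by omega]; ring
        rw [this]
        exact Ideal.mul_mem_mul (Ideal.subset_span ⟨i, by simp; omega, rfl⟩)
          (Ideal.subset_span (by simp))

end C

variable {k : Type*} [Field k]

local notation "S" => MvPolynomial (Fin 4) k

noncomputable def exp4 (a b c d : ℕ) : Fin 4 →₀ ℕ :=
  Finsupp.single 0 a + Finsupp.single 1 b + Finsupp.single 2 c + Finsupp.single 3 d

@[simp] lemma exp4_apply (a b c d : ℕ) (i : Fin 4) :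
    exp4 a b c d i = ![a, b, c, d] i := by
  fin_cases i <;> simp [exp4, Finsupp.single_apply]

lemma exp4_add (a b c d a' b' c' d' : ℕ) :
    exp4 a b c d + exp4 a' b' c' d' = exp4 (a+a') (b+b') (c+c') (d+d') := by
  ext i; fin_cases i <;> simp

lemma mono4 (a b c d : ℕ) :
    (X 0 : S)^a * X 1^b * X 2^c * X 3^d = monomial (exp4 a b c d) 1 := by
  simp only [X_pow_eq_monomial, monomial_mul, exp4, one_mul]

lemma sum_support_eq (d : Fin 4 →₀ ℕ) :
    ∑ i ∈ d.support, d i = d 0 + d 1 + d 2 + d 3 := by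
  rw [Finset.sum_subset (Finset.subset_univ d.support)
    (by intro x _ hx; exact Finsupp.notMem_support_iff.mp hx)]
  simp [Fin.sum_univ_four]

lemma isHomogeneous_iff' {p : S} {n : ℕ} :
    p.IsHomogeneous n ↔ ∀ m ∈ p.support, m 0 + m 1 + m 2 + m 3 = n := by
  constructor
  · intro h m hm
    have := h (mem_support_iff.mp hm)
    rw [Finsupp.weight_apply] at this
    simpa [Finsupp.sum, sum_support_eq, mul_comm] using this
  · intro h d hd
    have := h d (mem_support_iff.mpr hd)
    rw [Finsupp.weight_apply]
    simpa [Finsupp.sum, sum_support_eq, mul_comm] using this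

/-- the polynomial xz - yw -/
noncomputable def qq : S := X 0 * X 2 - X 1 * X 3

/-- the ideal -/
noncomputable def Idl (n1 n2 : ℕ) : Ideal S :=
  (Ideal.span {X 0, X 1}) ^ n1 + (Ideal.span {X 2, X 3}) ^ n2 + Ideal.span {qq}

/-- the Segre-type substitution x ↦ su, y ↦ sv, z ↦ tv, w ↦ tu -/
noncomputable def Phi : S →ₐ[k] S :=
  aeval ![X 0 * X 2, X 0 * X 3, X 1 * X 3, X 1 * X 2]

noncomputable def eexp (d : Fin 4 →₀ ℕ) : Fin 4 →₀ ℕ :=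
  exp4 (d 0 + d 1) (d 2 + d 3) (d 0 + d 3) (d 1 + d 2)

lemma Phi_monomial (d : Fin 4 →₀ ℕ) (r : k) :
    Phi (monomial d r) = monomial (eexp d) r := by
  rw [Phi, aeval_monomial]
  rw [Finsupp.prod_fintype _ _ (fun i => pow_zero _)]
  rw [Fin.prod_univ_four]
  have h0 : ![X 0 * X 2, X 0 * X 3, X 1 * X 3, (X 1 : S) * X 2] 0 = X 0 * X 2 := rfl
  have h1 : ![X 0 * X 2, X 0 * X 3, X 1 * X 3, (X 1 : S) * X 2] 1 = X 0 * X 3 := rfl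
  have h2 : ![X 0 * X 2, X 0 * X 3, X 1 * X 3, (X 1 : S) * X 2] 2 = X 1 * X 3 := rfl
  have h3 : ![X 0 * X 2, X 0 * X 3, X 1 * X 3, (X 1 : S) * X 2] 3 = X 1 * X 2 := rfl
  rw [h0, h1, h2, h3, show (algebraMap k S) r = C r from rfl]
  simp only [mul_pow, X_pow_eq_monomial, monomial_mul, C_mul_monomial, mul_one]
  have hE : ((Finsupp.single (0:Fin 4) (d 0)) + Finsupp.single 2 (d 0))
      + ((Finsupp.single 0 (d 1)) + Finsupp.single 3 (d 1))
      + ((Finsupp.single 1 (d 2)) + Finsupp.single 3 (d 2))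
      + ((Finsupp.single 1 (d 3)) + Finsupp.single 2 (d 3)) = eexp d := by
    ext i; fin_cases i <;> simp [eexp, exp4, Finsupp.single_apply]
  rw [hE]

@[simp] lemma Phi_X0 : Phi (X 0 : S) = X 0 * X 2 := by simp [Phi]
@[simp] lemma Phi_X1 : Phi (X 1 : S) = X 0 * X 3 := by simp [Phi]
@[simp] lemma Phi_X2 : Phi (X 2 : S) = X 1 * X 3 := by simp [Phi]
@[simp] lemma Phi_X3 : Phi (X 3 : S) = X 1 * X 2 := by simp [Phi]

@[simp] lemma Phi_qq : Phi (qq : S) = 0 := by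
  simp [qq]; ring

/-- support bound for images of the ideal -/
lemma supp_Phi_mem_Idl {n1 n2 : ℕ} {p : S} (hp : p ∈ Idl n1 n2) :
    ∀ ε ∈ (Phi p).support,
      (n1 ≤ ε 0 ∧ n1 ≤ ε 2 + ε 3) ∨ (n2 ≤ ε 1 ∧ n2 ≤ ε 2 + ε 3) := by
  -- Phi p lies in the monomial ideal with exponents E
  set E : Set (Fin 4 →₀ ℕ) :=
    ((fun i => exp4 n1 0 i (n1 - i)) '' {i | i ≤ n1}) ∪
    ((fun j => exp4 0 n2 (n2 - j) j) '' {j | j ≤ n2}) with hE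
  have hJ : Ideal.map Phi (Idl n1 n2 : Ideal S) ≤ Ideal.span ((fun s => monomial s (1:k)) '' E) := by
    rw [Idl, Submodule.add_eq_sup, Submodule.add_eq_sup, Ideal.map_sup, Ideal.map_sup]
    refine sup_le (sup_le ?_ ?_) ?_
    · rw [Ideal.map_pow, Ideal.map_span]
      have himg : Phi '' ({X 0, X 1} : Set S) = {X 0 * X 2, X 0 * X 3} := by
        simp [Set.image_insert_eq]
      rw [himg, span_pair_pow, Ideal.span_le]
      rintro x ⟨i, hi, rfl⟩
      simp only [Set.mem_setOf_eq] at hi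
      dsimp only
      have hx : (X 0 * X 2 : S) ^ i * (X 0 * X 3) ^ (n1 - i)
          = monomial (exp4 n1 0 i (n1 - i)) 1 := by
        rw [← mono4, mul_pow, mul_pow,
          show (X 0:S)^i * X 2^i * ((X 0)^(n1-i) * X 3^(n1-i))
            = ((X 0:S)^i * X 0^(n1-i)) * X 1^0 * X 2^i * X 3^(n1-i) by ring,
          ← pow_add, show i + (n1 - i) = n1 by omega]
      rw [hx]
      exact Ideal.subset_span ⟨_, Or.inl ⟨i, hi, rfl⟩, rfl⟩
    · rw [Ideal.map_pow, Ideal.map_span]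
      have himg : Phi '' ({X 2, X 3} : Set S) = {X 1 * X 3, X 1 * X 2} := by
        simp [Set.image_insert_eq]
      rw [himg, span_pair_pow, Ideal.span_le]
      rintro x ⟨j, hj, rfl⟩
      simp only [Set.mem_setOf_eq] at hj
      dsimp only
      have hx : (X 1 * X 3 : S) ^ j * (X 1 * X 2) ^ (n2 - j)
          = monomial (exp4 0 n2 (n2 - j) j) 1 := by
        rw [← mono4, mul_pow, mul_pow,
          show (X 1:S)^j * X 3^j * ((X 1)^(n2-j) * X 2^(n2-j))
            = (X 0:S)^0 * ((X 1:S)^j * X 1^(n2-j)) * X 2^(n2-j) * X 3^j by ring,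
          ← pow_add, show j + (n2 - j) = n2 by omega]
      rw [hx]
      exact Ideal.subset_span ⟨_, Or.inr ⟨j, hj, rfl⟩, rfl⟩
    · rw [Ideal.map_span, Set.image_singleton, Phi_qq,
        Ideal.span_singleton_eq_bot.mpr rfl]
      exact bot_le
  have hmem : Phi p ∈ Ideal.span ((fun s => monomial s (1:k)) '' E) :=
    hJ (Ideal.mem_map_of_mem _ hp)
  rw [mem_ideal_span_monomial_image] at hmem
  intro ε hε
  obtain ⟨e, he, hle⟩ := hmem ε hε
  rcases he with ⟨i, hi, rfl⟩ | ⟨j, hj, rfl⟩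
  · left
    have hv := fun t => Finsupp.le_def.mp hle t
    have h0 := hv 0; have h2 := hv 2; have h3 := hv 3
    simp only [exp4_apply, Matrix.cons_val_zero, Matrix.cons_val_one, Matrix.head_cons,
      Matrix.cons_val_two, Matrix.cons_val_three, Matrix.tail_cons, Matrix.head_fin_const] at h0 h2 h3
    simp only [Set.mem_setOf_eq] at hi
    omega
  · right
    have hv := fun t => Finsupp.le_def.mp hle t
    have h1 := hv 1; have h2 := hv 2; have h3 := hv 3
    simp only [exp4_apply, Matrix.cons_val_zero, Matrix.cons_val_one, Matrix.head_cons,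
      Matrix.cons_val_two, Matrix.cons_val_three, Matrix.tail_cons, Matrix.head_fin_const] at h1 h2 h3
    simp only [Set.mem_setOf_eq] at hj
    omega

lemma supp_Phi (p : S) {ε : Fin 4 →₀ ℕ} (hε : ε ∈ (Phi p).support) :
    ∃ d ∈ p.support, ε = eexp d := by
  classical
  rw [show Phi p = ∑ d ∈ p.support, monomial (eexp d) (coeff d p) by
    conv_lhs => rw [as_sum p]
    rw [map_sum]
    exact Finset.sum_congr rfl fun d _ => Phi_monomial d _] at hε
  obtain ⟨d, hd, hεd⟩ := Finset.mem_biUnion.mp (support_sum hε)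
  refine ⟨d, hd, ?_⟩
  have := support_monomial_subset hεd
  simpa using this

lemma supp_Phi_deg {p : S} {N : ℕ} (hdeg : p.totalDegree ≤ N)
    {ε : Fin 4 →₀ ℕ} (hε : ε ∈ (Phi p).support) :
    ε 0 + ε 1 ≤ N ∧ ε 2 + ε 3 ≤ N ∧ ε 0 + ε 1 = ε 2 + ε 3 := by
  obtain ⟨d, hd, rfl⟩ := supp_Phi p hε
  have hle : d 0 + d 1 + d 2 + d 3 ≤ N := by
    have := le_totalDegree hd
    have h2 : (d.sum fun _ e => e) = d 0 + d 1 + d 2 + d 3 := by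
      rw [Finsupp.sum, sum_support_eq]
    omega
  simp only [eexp, exp4_apply, Matrix.cons_val_zero, Matrix.cons_val_one, Matrix.head_cons,
    Matrix.cons_val_two, Matrix.cons_val_three, Matrix.tail_cons]
  omega

/-- truncation killing monomials with t-degree ≥ n2 -/
noncomputable def tr (n2 : ℕ) (p : S) : S :=
  AddMonoidAlgebra.ofCoeff (Finsupp.filter (fun ε : Fin 4 →₀ ℕ => ε 1 < n2) (AddMonoidAlgebra.coeff p))

lemma coeff_tr (n2 : ℕ) (p : S) (ε : Fin 4 →₀ ℕ) :
    coeff ε (tr n2 p) = if ε 1 < n2 then coeff ε p else 0 := by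
  classical
  rw [tr, coeff]
  erw [Finsupp.filter_apply]
  rfl

lemma tr_sub (n2 : ℕ) (p q : S) : tr n2 (p - q) = tr n2 p - tr n2 q := by
  apply MvPolynomial.ext
  intro ε
  simp only [coeff_tr, coeff_sub]
  split <;> simp

lemma tr_eq_zero_iff (n2 : ℕ) (p : S) :
    tr n2 p = 0 ↔ ∀ ε ∈ p.support, n2 ≤ ε 1 := by
  constructor
  · intro h ε hε
    by_contra hcon
    have := congrArg (coeff ε) h
    rw [coeff_tr, if_pos (by omega)] at this
    exact (mem_support_iff.mp hε) (by simpa using this)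
  · intro h
    apply MvPolynomial.ext
    intro ε
    rw [coeff_tr, coeff_zero]
    split_ifs with hc
    · by_contra hne
      have := h ε (mem_support_iff.mpr hne)
      omega
    · rfl

lemma tr_X_mul (n2 : ℕ) (s : Fin 4) (hs : s ≠ 1) (p : S) :
    tr n2 (X s * p) = X s * tr n2 p := by
  classical
  apply MvPolynomial.ext
  intro ε
  rw [coeff_tr, coeff_X_mul', coeff_X_mul']
  by_cases hmem : s ∈ ε.support
  · rw [if_pos hmem, if_pos hmem, coeff_tr, Finsupp.tsub_apply, Finsupp.single_apply,
      if_neg hs, Nat.sub_zero]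
  · rw [if_neg hmem, if_neg hmem]
    split <;> rfl

lemma exp4_eta (m : Fin 4 →₀ ℕ) : exp4 (m 0) (m 1) (m 2) (m 3) = m := by
  ext i; fin_cases i <;> simp

lemma monomial_mul_qq (A B Cc D : ℕ) (r : k) :
    monomial (exp4 (A+1) B (Cc+1) D) r - monomial (exp4 A (B+1) Cc (D+1)) r
      = monomial (exp4 A B Cc D) r * qq := by
  rw [qq, mul_sub]
  rw [show (X 0 : S) * X 2 = monomial (exp4 1 0 1 0) 1 by
    rw [← mono4]; ring]
  rw [show (X 1 : S) * X 3 = monomial (exp4 0 1 0 1) 1 by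
    rw [← mono4]; ring]
  rw [monomial_mul, monomial_mul, exp4_add, exp4_add, mul_one]
  norm_num

lemma qchain (A B Cc D : ℕ) (r : k) (j : ℕ) (hA : j ≤ A) (hC : j ≤ Cc) :
    monomial (exp4 A B Cc D) r - monomial (exp4 (A-j) (B+j) (Cc-j) (D+j)) r
      ∈ Ideal.span {(qq : S)} := by
  induction j with
  | zero => simp
  | succ j ih =>
    have h1 := ih (by omega) (by omega)
    have h2 : monomial (exp4 (A-j) (B+j) (Cc-j) (D+j)) r
        - monomial (exp4 (A-(j+1)) (B+(j+1)) (Cc-(j+1)) (D+(j+1))) r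
        ∈ Ideal.span {(qq:S)} := by
      rw [show A - j = (A - (j+1)) + 1 by omega, show Cc - j = (Cc - (j+1)) + 1 by omega,
        show B + (j+1) = (B+j) + 1 by omega, show D + (j+1) = (D+j) + 1 by omega,
        show B + j = (B + j) by rfl, monomial_mul_qq]
      exact Ideal.mem_span_singleton.mpr (Dvd.intro_left _ rfl)
    have h3 := Ideal.add_mem _ h1 h2
    rw [sub_add_sub_cancel] at h3
    exact h3

noncomputable def pre (ε : Fin 4 →₀ ℕ) : Fin 4 →₀ ℕ :=
  if ε 1 ≤ ε 2 then exp4 (ε 2 - ε 1) (ε 0 - (ε 2 - ε 1)) 0 (ε 1)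
  else exp4 0 (ε 0) (ε 1 - ε 2) (ε 2)

noncomputable def Theta (n2 : ℕ) (p : S) : S :=
  Finsupp.sum (AddMonoidAlgebra.coeff p) fun ε r => if n2 ≤ ε 1 then 0 else monomial (pre ε) r

lemma Theta_monomial (n2 : ℕ) (ε : Fin 4 →₀ ℕ) (r : k) :
    Theta n2 (monomial ε r) = if n2 ≤ ε 1 then 0 else monomial (pre ε) r := by
  rw [Theta, sum_monomial_eq]
  split <;> simp

lemma Theta_add (n2 : ℕ) (p q : S) :
    Theta n2 (p + q) = Theta n2 p + Theta n2 q := by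
  rw [Theta, Theta, Theta]
  apply Finsupp.sum_add_index
  · intro ε _; split <;> simp
  · intro ε _ r1 r2; split <;> simp

lemma Theta_eq_zero {n2 : ℕ} {p : S} (h : ∀ ε ∈ p.support, n2 ≤ ε 1) :
    Theta n2 p = 0 := by
  rw [Theta]
  apply Finset.sum_eq_zero
  intro ε hε
  dsimp only
  rw [if_pos (h ε hε)]

lemma span_pair_23_mem (d : Fin 4 →₀ ℕ) (r : k) {n2 : ℕ} (h : n2 ≤ d 2 + d 3) :
    monomial d r ∈ (Ideal.span {(X 2 : S), X 3}) ^ n2 := by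
  have : monomial d r = (C r * X 0 ^ d 0 * X 1 ^ d 1) * (X 2 ^ d 2 * X 3 ^ d 3) := by
    rw [show (C r * X 0 ^ d 0 * X 1 ^ d 1) * ((X 2:S) ^ d 2 * X 3 ^ d 3)
      = C r * (X 0 ^ d 0 * X 1 ^ d 1 * X 2 ^ d 2 * X 3 ^ d 3) by ring, mono4,
      C_mul_monomial, mul_one, exp4_eta]
  rw [this]
  apply Ideal.mul_mem_left
  have h2 : (X 2 : S) ^ d 2 * X 3 ^ d 3 ∈ (Ideal.span {(X 2 : S), X 3}) ^ (d 2 + d 3) := by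
    rw [pow_add]
    exact Ideal.mul_mem_mul
      (Ideal.pow_mem_pow (Ideal.subset_span (by simp)) _)
      (Ideal.pow_mem_pow (Ideal.subset_span (by simp)) _)
  exact Ideal.pow_le_pow_right h h2

lemma span_qq_le_Idl {n1 n2 : ℕ} : Ideal.span {(qq : S)} ≤ Idl n1 n2 := by
  rw [Idl]
  exact le_sup_right

lemma lemA {n1 n2 : ℕ} (p : S) (hsupp : ∀ ε ∈ (Phi p).support, n2 ≤ ε 1) :
    p ∈ Idl n1 n2 := by
  have key : ∀ q : S, q - Theta n2 (Phi q) ∈ Idl n1 n2 := by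
    intro q
    induction q using MvPolynomial.induction_on' with
    | monomial d r =>
      rw [Phi_monomial, Theta_monomial]
      split_ifs with hc
      · rw [sub_zero]
        have hc' : n2 ≤ d 2 + d 3 := by
          simpa [eexp] using hc
        have : monomial d r ∈ (Ideal.span {(X 2 : S), X 3}) ^ n2 :=
          span_pair_23_mem d r hc'
        rw [Idl]
        exact Submodule.mem_sup_left (Submodule.mem_sup_right this)
      · have hc' : ¬ n2 ≤ d 2 + d 3 := by
          simpa [eexp] using hc
        by_cases hd : d 2 ≤ d 0
        · have hpre : pre (eexp d) = exp4 (d 0 - d 2) (d 1 + d 2) 0 (d 3 + d 2) := by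
            rw [pre, if_pos (by simp [eexp]; omega)]
            have e1 : eexp d 2 - eexp d 1 = d 0 - d 2 := by simp [eexp]; omega
            rw [e1]
            ext i; fin_cases i <;> simp [eexp] <;> omega
          rw [hpre]
          refine span_qq_le_Idl ?_
          have := qchain (d 0) (d 1) (d 2) (d 3) r (d 2) hd le_rfl
          rw [exp4_eta, Nat.sub_self] at this
          convert this using 4 <;> omega
        · have hpre : pre (eexp d) = exp4 0 (d 1 + d 0) (d 2 - d 0) (d 3 + d 0) := by
            rw [pre, if_neg (by simp [eexp]; omega)]
            ext i; fin_cases i <;> simp [eexp] <;> omega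
          rw [hpre]
          refine span_qq_le_Idl ?_
          have := qchain (d 0) (d 1) (d 2) (d 3) r (d 0) le_rfl (by omega)
          rw [exp4_eta, Nat.sub_self] at this
          convert this using 4 <;> omega
    | add p q hp hq =>
      rw [map_add, Theta_add, show p + q - (Theta n2 (Phi p) + Theta n2 (Phi q))
        = (p - Theta n2 (Phi p)) + (q - Theta n2 (Phi q)) by ring]
      exact Ideal.add_mem _ hp hq
  have hzero : Theta n2 (Phi p) = 0 := Theta_eq_zero hsupp
  have := key p
  rwa [hzero, sub_zero] at this

lemma supp_tr_subset (n2 : ℕ) (p : S) : (tr n2 p).support ⊆ p.support := by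
  intro η hη
  rw [mem_support_iff] at hη ⊢
  rw [coeff_tr] at hη
  by_cases hc : η 1 < n2
  · rwa [if_pos hc] at hη
  · rw [if_neg hc] at hη; exact absurd rfl hη

lemma keyLemma {n1 n2 : ℕ} (h1 : 2 ≤ n1) (h2 : 2 ≤ n2) (c : ℕ → S)
    (hdeg : ∀ i, i ≤ n1 → (c i).totalDegree ≤ n1 - 1)
    (hrel1 : ∀ i, i < n1 → X 1 * c i - X 0 * c (i+1) ∈ Idl n1 n2)
    (hrel2 : ∀ i, i < n1 → X 2 * c i - X 3 * c (i+1) ∈ Idl n1 n2) :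
    ∀ i, i ≤ n1 → c i ∈ Idl n1 n2 := by
  classical
  set N := n1 - 1 with hN
  set Cc : ℕ → S := fun i => Phi (c i) with hCc
  set Dd : ℕ → S := fun i => tr n2 (Cc i) with hDd
  have hCsupp : ∀ i, i ≤ n1 → ∀ ε ∈ (Cc i).support, ε 0 + ε 1 ≤ N ∧ ε 2 + ε 3 ≤ N := by
    intro i hi ε hε
    have := supp_Phi_deg (hdeg i hi) hε
    exact ⟨this.1, this.2.1⟩
  -- step 1 : X3 * Dd i = X2 * Dd (i+1)
  have hstep1 : ∀ i, i < n1 → X 3 * Dd i = X 2 * Dd (i+1) := by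
    intro i hi
    set g : S := X 3 * Cc i - X 2 * Cc (i+1) with hg
    have hs : Phi (X 1 * c i - X 0 * c (i+1)) = X 0 * g := by
      rw [map_sub, map_mul, map_mul, Phi_X1, Phi_X0, hg, hCc]; ring
    have ht : Phi (X 2 * c i - X 3 * c (i+1)) = X 1 * g := by
      rw [map_sub, map_mul, map_mul, Phi_X2, Phi_X3, hg, hCc]; ring
    have hgsupp : ∀ ε ∈ g.support, n2 ≤ ε 1 := by
      intro ε hε
      have hb : ε 0 + ε 1 ≤ N := by
        have hcoeff : coeff ε (X 3 * Cc i) ≠ 0 ∨ coeff ε (X 2 * Cc (i+1)) ≠ 0 := by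
          by_contra hcon
          push_neg at hcon
          have := mem_support_iff.mp hε
          rw [hg, coeff_sub, hcon.1, hcon.2, sub_zero] at this
          exact this rfl
        rcases hcoeff with hcf | hcf
        · rw [coeff_X_mul'] at hcf
          split_ifs at hcf with hm
          · have hη := hCsupp i (by omega) _ (mem_support_iff.mpr hcf)
            have e0 : ((ε - Finsupp.single 3 1 : Fin 4 →₀ ℕ)) 0 = ε 0 := by
              rw [Finsupp.tsub_apply, Finsupp.single_apply, if_neg (by decide), Nat.sub_zero]
            have e1 : ((ε - Finsupp.single 3 1 : Fin 4 →₀ ℕ)) 1 = ε 1 := by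
              rw [Finsupp.tsub_apply, Finsupp.single_apply, if_neg (by decide), Nat.sub_zero]
            omega
          · exact absurd rfl hcf
        · rw [coeff_X_mul'] at hcf
          split_ifs at hcf with hm
          · have hη := hCsupp (i+1) (by omega) _ (mem_support_iff.mpr hcf)
            have e0 : ((ε - Finsupp.single 2 1 : Fin 4 →₀ ℕ)) 0 = ε 0 := by
              rw [Finsupp.tsub_apply, Finsupp.single_apply, if_neg (by decide), Nat.sub_zero]
            have e1 : ((ε - Finsupp.single 2 1 : Fin 4 →₀ ℕ)) 1 = ε 1 := by
              rw [Finsupp.tsub_apply, Finsupp.single_apply, if_neg (by decide), Nat.sub_zero]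
            omega
          · exact absurd rfl hcf
      have hmem0 := supp_Phi_mem_Idl (hrel1 i hi)
      rw [hs] at hmem0
      have h0 : (Finsupp.single 0 1 + ε) ∈ (X 0 * g).support := by
        rw [mem_support_iff, coeff_X_mul]
        exact mem_support_iff.mp hε
      have d0 := hmem0 _ h0
      have hmem1 := supp_Phi_mem_Idl (hrel2 i hi)
      rw [ht] at hmem1
      have h1' : (Finsupp.single 1 1 + ε) ∈ (X 1 * g).support := by
        rw [mem_support_iff, coeff_X_mul]
        exact mem_support_iff.mp hε
      have d1 := hmem1 _ h1'
      simp only [Finsupp.add_apply, Finsupp.single_apply] at d0 d1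
      norm_num at d0 d1
      omega
    have htr : tr n2 g = 0 := (tr_eq_zero_iff _ _).mpr hgsupp
    rw [hg, tr_sub, tr_X_mul n2 3 (by decide), tr_X_mul n2 2 (by decide)] at htr
    have := sub_eq_zero.mp htr
    exact this
  -- step 2
  have hstep2 : ∀ i, i ≤ n1 → X 3 ^ i * Dd 0 = X 2 ^ i * Dd i := by
    intro i
    induction i with
    | zero => intro _; simp
    | succ i ih =>
      intro hi
      have e := ih (by omega)
      calc X 3 ^ (i+1) * Dd 0 = X 3 * (X 3 ^ i * Dd 0) := by ring
      _ = X 3 * (X 2 ^ i * Dd i) := by rw [e]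
      _ = X 2 ^ i * (X 3 * Dd i) := by ring
      _ = X 2 ^ i * (X 2 * Dd (i+1)) := by rw [hstep1 i (by omega)]
      _ = X 2 ^ (i+1) * Dd (i+1) := by ring
  -- step 3
  have hD0 : Dd 0 = 0 := by
    by_contra hne
    have hprod : X 3 ^ n1 * Dd 0 ≠ 0 :=
      mul_ne_zero (pow_ne_zero _ (X_ne_zero _)) hne
    have hprod2 : X 2 ^ n1 * Dd n1 ≠ 0 := by
      rw [← hstep2 n1 le_rfl]; exact hprod
    obtain ⟨ε, hε⟩ := MvPolynomial.support_nonempty.mpr hprod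
    have hε2 : ε ∈ (X 2 ^ n1 * Dd n1).support := by
      rwa [← hstep2 n1 le_rfl]
    have hup : ε 2 ≤ N := by
      have := support_mul _ _ hε
      rw [Finset.mem_add] at this
      obtain ⟨b, hb, η, hη, rfl⟩ := this
      rw [support_X_pow] at hb
      have hb' : b = Finsupp.single 3 n1 := by simpa using hb
      subst hb'
      have hηC : η ∈ (Cc 0).support := supp_tr_subset _ _ hη
      have := hCsupp 0 (by omega) η hηC
      have e2 : (Finsupp.single (3:Fin 4) n1 + η) 2 = η 2 := by
        rw [Finsupp.add_apply, Finsupp.single_apply, if_neg (by decide), zero_add]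
      omega
    have hlow : n1 ≤ ε 2 := by
      have := support_mul _ _ hε2
      rw [Finset.mem_add] at this
      obtain ⟨b, hb, η, hη, rfl⟩ := this
      rw [support_X_pow] at hb
      have hb' : b = Finsupp.single 2 n1 := by simpa using hb
      subst hb'
      have e2 : (Finsupp.single (2:Fin 4) n1 + η) 2 = n1 + η 2 := by
        rw [Finsupp.add_apply, Finsupp.single_apply, if_pos rfl]
      omega
    omega
  -- step 4
  have hDall : ∀ i, i ≤ n1 → Dd i = 0 := by
    intro i
    induction i with
    | zero => intro _; exact hD0
    | succ i ih =>
      intro hi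
      have h := hstep1 i (by omega)
      rw [ih (by omega), mul_zero] at h
      rcases mul_eq_zero.mp h.symm with h' | h'
      · exact absurd h' (X_ne_zero _)
      · exact h'
  intro i hi
  apply lemA
  intro ε hε
  exact (tr_eq_zero_iff n2 (Cc i)).mp (hDall i hi) ε hε

/-- the swap x↔z, y↔w -/
noncomputable def sw : S →ₐ[k] S := rename ![2, 3, 0, 1]

@[simp] lemma sw_X0 : sw (X 0 : S) = X 2 := by rw [sw, rename_X]; rfl
@[simp] lemma sw_X1 : sw (X 1 : S) = X 3 := by rw [sw, rename_X]; rfl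
@[simp] lemma sw_X2 : sw (X 2 : S) = X 0 := by rw [sw, rename_X]; rfl
@[simp] lemma sw_X3 : sw (X 3 : S) = X 1 := by rw [sw, rename_X]; rfl

lemma sw_sw (p : S) : sw (sw p) = p := by
  show (rename ![2, 3, 0, 1]) ((rename ![2, 3, 0, 1]) p) = p
  rw [rename_rename]
  rw [show (![2, 3, 0, 1] ∘ ![2, 3, 0, 1] : Fin 4 → Fin 4) = id by
    funext i; fin_cases i <;> rfl]
  exact rename_id_apply p

lemma sw_qq : sw (qq : S) = qq := by
  rw [qq]
  rw [map_sub, map_mul, map_mul, sw_X0, sw_X1, sw_X2, sw_X3]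
  ring

lemma sw_mem_Idl {n1 n2 : ℕ} {p : S} (hp : p ∈ Idl n1 n2) : sw p ∈ Idl n2 n1 := by
  have hmap : Ideal.map (sw : S →ₐ[k] S) (Idl n1 n2) ≤ Idl n2 n1 := by
    rw [Idl, Submodule.add_eq_sup, Submodule.add_eq_sup, Ideal.map_sup, Ideal.map_sup]
    refine sup_le (sup_le ?_ ?_) ?_
    · rw [Ideal.map_pow, Ideal.map_span]
      have himg : (sw : S →ₐ[k] S) '' ({X 0, X 1} : Set S) = {X 2, X 3} := by
        simp [Set.image_insert_eq]
      rw [himg, Idl]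
      refine le_trans ?_ (le_trans le_sup_right le_sup_left)
      exact le_rfl
    · rw [Ideal.map_pow, Ideal.map_span]
      have himg : (sw : S →ₐ[k] S) '' ({X 2, X 3} : Set S) = {X 0, X 1} := by
        simp [Set.image_insert_eq]
      rw [himg, Idl]
      exact le_trans (le_trans le_sup_left le_sup_left) le_rfl
    · rw [Ideal.map_span, Set.image_singleton, sw_qq, Idl]
      exact le_sup_right
  exact hmap (Ideal.mem_map_of_mem _ hp)

lemma sw_totalDegree (p : S) {n : ℕ} (h : p.totalDegree ≤ n) : (sw p).totalDegree ≤ n :=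
  le_trans (totalDegree_rename_le _ p) h

/-- decomposition of a homogeneous degree-1 polynomial -/
lemma homog1_decomp (l : S) (h : l.IsHomogeneous 1) :
    l = coeff (Finsupp.single 0 1) l • X 0 + coeff (Finsupp.single 1 1) l • X 1
      + coeff (Finsupp.single 2 1) l • X 2 + coeff (Finsupp.single 3 1) l • X 3 := by
  have hsupp := isHomogeneous_iff'.mp h
  apply MvPolynomial.ext
  intro d
  have hcX : ∀ (i : Fin 4) (r : k), coeff d (r • (X i : S)) = if Finsupp.single i 1 = d then r else 0 := by
    intro i r
    rw [coeff_smul, X, coeff_monomial]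
    split <;> simp
  rw [coeff_add, coeff_add, coeff_add, hcX, hcX, hcX, hcX]
  by_cases hd : d 0 + d 1 + d 2 + d 3 = 1
  · have hone : ∃ i : Fin 4, d = Finsupp.single i 1 := by
      rcases (by omega : (d 0 = 1 ∧ d 1 = 0 ∧ d 2 = 0 ∧ d 3 = 0) ∨
        (d 0 = 0 ∧ d 1 = 1 ∧ d 2 = 0 ∧ d 3 = 0) ∨
        (d 0 = 0 ∧ d 1 = 0 ∧ d 2 = 1 ∧ d 3 = 0) ∨
        (d 0 = 0 ∧ d 1 = 0 ∧ d 2 = 0 ∧ d 3 = 1)) with h'|h'|h'|h'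
      · exact ⟨0, by ext i; fin_cases i <;> simp [Finsupp.single_apply] <;> omega⟩
      · exact ⟨1, by ext i; fin_cases i <;> simp [Finsupp.single_apply] <;> omega⟩
      · exact ⟨2, by ext i; fin_cases i <;> simp [Finsupp.single_apply] <;> omega⟩
      · exact ⟨3, by ext i; fin_cases i <;> simp [Finsupp.single_apply] <;> omega⟩
    obtain ⟨i, rfl⟩ := hone
    have hne : ∀ j : Fin 4, j ≠ i → ¬ (Finsupp.single j 1 = Finsupp.single i 1) := by
      intro j hj hc
      have := congrArg (fun f : Fin 4 →₀ ℕ => f j) hc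
      simp [Finsupp.single_apply, hj] at this
    fin_cases i <;>
      simp only [if_pos rfl] <;>
      [ (rw [if_neg (hne 1 (by decide)), if_neg (hne 2 (by decide)), if_neg (hne 3 (by decide))]);
        (rw [if_neg (hne 0 (by decide)), if_neg (hne 2 (by decide)), if_neg (hne 3 (by decide))]);
        (rw [if_neg (hne 0 (by decide)), if_neg (hne 1 (by decide)), if_neg (hne 3 (by decide))]);
        (rw [if_neg (hne 0 (by decide)), if_neg (hne 1 (by decide)), if_neg (hne 2 (by decide))])] <;>
      simp
  · have hl : coeff d l = 0 := by
      by_contra hc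
      exact hd (hsupp d (mem_support_iff.mpr hc))
    have hnei : ∀ i : Fin 4, ¬ (Finsupp.single i 1 = d) := by
      intro i hc
      apply hd
      rw [← hc]
      fin_cases i <;> simp [Finsupp.single_apply]
    rw [hl, if_neg (hnei 0), if_neg (hnei 1), if_neg (hnei 2), if_neg (hnei 3)]
    simp

noncomputable def Dop (a a' b b' : k) (p : S) : S :=
  a • pderiv 0 p + a' • pderiv 1 p + b • pderiv 2 p + b' • pderiv 3 p

variable {a a' b b' : k}

lemma Dop_add (p q : S) : Dop a a' b b' (p + q) = Dop a a' b b' p + Dop a a' b b' q := by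
  simp only [Dop, map_add, smul_add]
  abel

lemma Dop_zero : Dop a a' b b' (0 : S) = 0 := by
  simp [Dop]

lemma Dop_sub (p q : S) : Dop a a' b b' (p - q) = Dop a a' b b' p - Dop a a' b b' q := by
  simp only [Dop, map_sub, smul_sub]
  abel

lemma Dop_mul (u v : S) :
    Dop a a' b b' (u * v) = u * Dop a a' b b' v + v * Dop a a' b b' u := by
  simp only [Dop, pderiv_mul, smul_add, Algebra.smul_def]
  ring

lemma totalDegree_pderiv_monomial_le (j : Fin 4) (d : Fin 4 →₀ ℕ) (r : k) :
    (pderiv j (monomial d r)).totalDegree ≤ d 0 + d 1 + d 2 + d 3 - 1 := by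
  rw [pderiv_monomial]
  by_cases hj : d j = 0
  · simp [hj]
  · refine le_trans (totalDegree_monomial_le _ _) ?_
    rw [Finsupp.sum]
    simp only [id_eq]
    rw [sum_support_eq]
    have hv : ∀ i : Fin 4, ((d - Finsupp.single j 1 : Fin 4 →₀ ℕ)) i
        = d i - (if j = i then 1 else 0) := by
      intro i; rw [Finsupp.tsub_apply, Finsupp.single_apply]
    rw [hv 0, hv 1, hv 2, hv 3]
    fin_cases j <;> simp_all <;> omega

lemma totalDegree_Dop_monomial_le (d : Fin 4 →₀ ℕ) (r : k) {n : ℕ}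
    (h : d 0 + d 1 + d 2 + d 3 ≤ n + 1) :
    (Dop a a' b b' (monomial d r)).totalDegree ≤ n := by
  have hone : ∀ (s : k) (j : Fin 4), (s • pderiv j (monomial d r)).totalDegree ≤ n := by
    intro s j
    refine le_trans (totalDegree_smul_le _ _) (le_trans (totalDegree_pderiv_monomial_le j d r) ?_)
    omega
  rw [Dop]
  refine le_trans (totalDegree_add _ _) (max_le (le_trans (totalDegree_add _ _)
    (max_le (le_trans (totalDegree_add _ _) (max_le (hone _ _) (hone _ _))) (hone _ _))) (hone _ _))

lemma mem_pow_pair {R : Type*} [CommRing R] (u v : R) (ae be n : ℕ) (h : n ≤ ae + be) :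
    u ^ ae * v ^ be ∈ Ideal.span {u, v} ^ n := by
  have h2 : u ^ ae * v ^ be ∈ Ideal.span {u, v} ^ (ae + be) := by
    rw [pow_add]
    exact Ideal.mul_mem_mul
      (Ideal.pow_mem_pow (Ideal.subset_span (by simp)) _)
      (Ideal.pow_mem_pow (Ideal.subset_span (by simp)) _)
  exact Ideal.pow_le_pow_right h h2

lemma Idl_eq_span (n1 n2 : ℕ) :
    Idl n1 n2 = Ideal.span ((((fun i => (X 0:S)^(n1-i) * X 1^i) '' {i | i ≤ n1})
      ∪ ((fun j => (X 2:S)^(n2-j) * X 3^j) '' {j | j ≤ n2})) ∪ {qq}) := by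
  rw [Idl, Submodule.add_eq_sup, Submodule.add_eq_sup, Ideal.span_union, Ideal.span_union]
  congr 1
  congr 1
  · rw [span_pair_pow]
    congr 1
    ext x
    constructor
    · rintro ⟨i, hi, rfl⟩
      simp only [Set.mem_setOf_eq] at hi
      refine ⟨n1 - i, by simp, ?_⟩
      dsimp only
      rw [show n1 - (n1 - i) = i by omega]
    · rintro ⟨i, hi, rfl⟩
      simp only [Set.mem_setOf_eq] at hi
      refine ⟨n1 - i, by simp, ?_⟩
      dsimp only
      rw [show n1 - (n1 - i) = i by omega]
  · rw [span_pair_pow]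
    congr 1
    ext x
    constructor
    · rintro ⟨j, hj, rfl⟩
      simp only [Set.mem_setOf_eq] at hj
      refine ⟨n2 - j, by simp, ?_⟩
      dsimp only
      rw [show n2 - (n2 - j) = j by omega]
    · rintro ⟨j, hj, rfl⟩
      simp only [Set.mem_setOf_eq] at hj
      refine ⟨n2 - j, by simp, ?_⟩
      dsimp only
      rw [show n2 - (n2 - j) = j by omega]

lemma totalDegree_sub_le' (p q : S) :
    (p - q).totalDegree ≤ max p.totalDegree q.totalDegree := by
  rw [sub_eq_add_neg]
  refine le_trans (totalDegree_add _ _) ?_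
  rw [totalDegree_neg]

end Stmt14Aux

theorem stmt14 (k : Type*) [Field k] [CharZero k] (n1 n2 : ℕ) (h1 : 2 ≤ n1) (h2 : 2 ≤ n2)
    (I : Ideal (MvPolynomial (Fin 4) k))
    (hI : I = (Ideal.span {X 0, X 1}) ^ n1 + (Ideal.span {X 2, X 3}) ^ n2
        + Ideal.span {X 0 * X 2 - X 1 * X 3})
    (φ : I →ₗ[MvPolynomial (Fin 4) k] (MvPolynomial (Fin 4) k ⧸ I))
    (hgraded : ∀ (m : ℕ) (p : MvPolynomial (Fin 4) k) (hp : p ∈ I),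
      p.IsHomogeneous (m + 1) →
        φ ⟨p, hp⟩ ∈ Ideal.Quotient.mk I '' ↑(homogeneousSubmodule (Fin 4) k m)) :
    ∃ a a' b b' : k, ∀ (p : MvPolynomial (Fin 4) k) (hp : p ∈ I),
      φ ⟨p, hp⟩ = Ideal.Quotient.mk I
        (a • pderiv 0 p + a' • pderiv 1 p + b • pderiv 2 p + b' • pderiv 3 p) := by
  classical
  have hIdl : I = Stmt14Aux.Idl n1 n2 := by rw [hI, Stmt14Aux.Idl, Stmt14Aux.qq]
  set S' := MvPolynomial (Fin 4) k with hS'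
  set m : ℕ → S' := fun i => X 0 ^ (n1 - i) * X 1 ^ i with hm_def
  set M : ℕ → S' := fun j => X 2 ^ (n2 - j) * X 3 ^ j with hM_def
  have hmI : ∀ i, m i ∈ I := by
    intro i
    rw [hIdl, Stmt14Aux.Idl]
    refine Submodule.mem_sup_left (Submodule.mem_sup_left ?_)
    rw [hm_def]
    show (X 0:MvPolynomial (Fin 4) k) ^ (n1-i) * X 1 ^ i ∈ _
    exact Stmt14Aux.mem_pow_pair (X 0) (X 1) (n1-i) i n1 (by omega)
  have hMI : ∀ j, M j ∈ I := by
    intro j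
    rw [hIdl, Stmt14Aux.Idl]
    refine Submodule.mem_sup_left (Submodule.mem_sup_right ?_)
    rw [hM_def]
    show (X 2:MvPolynomial (Fin 4) k) ^ (n2-j) * X 3 ^ j ∈ _
    exact Stmt14Aux.mem_pow_pair (X 2) (X 3) (n2-j) j n2 (by omega)
  have hqI : Stmt14Aux.qq ∈ I := by
    rw [hIdl, Stmt14Aux.Idl]
    exact Submodule.mem_sup_right (Ideal.subset_span rfl)
  -- monomial forms
  have hm_mono : ∀ i, m i = monomial (Stmt14Aux.exp4 (n1-i) i 0 0) (1:k) := by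
    intro i
    rw [hm_def]
    dsimp only
    rw [← Stmt14Aux.mono4]
    ring
  have hM_mono : ∀ j, M j = monomial (Stmt14Aux.exp4 0 0 (n2-j) j) (1:k) := by
    intro j
    rw [hM_def]
    dsimp only
    rw [← Stmt14Aux.mono4]
    ring
  -- homogeneity of generators
  have hmhom : ∀ i, i ≤ n1 → (m i).IsHomogeneous n1 := by
    intro i hi
    rw [Stmt14Aux.isHomogeneous_iff']
    intro dd hdd
    rw [hm_mono i, support_monomial, if_neg one_ne_zero] at hdd
    have : dd = Stmt14Aux.exp4 (n1-i) i 0 0 := by simpa using hdd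
    subst this
    simp
    omega
  have hMhom : ∀ j, j ≤ n2 → (M j).IsHomogeneous n2 := by
    intro j hj
    rw [Stmt14Aux.isHomogeneous_iff']
    intro dd hdd
    rw [hM_mono j, support_monomial, if_neg one_ne_zero] at hdd
    have : dd = Stmt14Aux.exp4 0 0 (n2-j) j := by simpa using hdd
    subst this
    simp
    omega
  have hqhom : (Stmt14Aux.qq : S').IsHomogeneous 2 := by
    rw [Stmt14Aux.isHomogeneous_iff']
    intro dd hdd
    rw [Stmt14Aux.qq] at hdd
    have h02 : (X 0 * X 2 : S') = monomial (Stmt14Aux.exp4 1 0 1 0) 1 := by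
      rw [← Stmt14Aux.mono4]; ring
    have h13 : (X 1 * X 3 : S') = monomial (Stmt14Aux.exp4 0 1 0 1) 1 := by
      rw [← Stmt14Aux.mono4]; ring
    rw [h02, h13] at hdd
    have := support_sub _ _ _ hdd
    rw [Finset.mem_union] at this
    rcases this with h | h <;>
    · rw [support_monomial, if_neg one_ne_zero] at h
      have := Finset.mem_singleton.mp h
      subst this
      simp
  -- representatives
  have hexist_m : ∀ i, ∃ l : S', i ≤ n1 →
      l.IsHomogeneous (n1-1) ∧ Ideal.Quotient.mk I l = φ ⟨m i, hmI i⟩ := by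
    intro i
    by_cases hi : i ≤ n1
    · have hh : (m i).IsHomogeneous ((n1 - 1) + 1) := by
        rw [show (n1-1)+1 = n1 by omega]
        exact hmhom i hi
      obtain ⟨l, hl, hlq⟩ := hgraded (n1-1) (m i) (hmI i) hh
      exact ⟨l, fun _ => ⟨(mem_homogeneousSubmodule _ _).mp hl, hlq⟩⟩
    · exact ⟨0, fun h => absurd h hi⟩
  choose repm hrepm using hexist_m
  have hexist_M : ∀ j, ∃ l : S', j ≤ n2 →
      l.IsHomogeneous (n2-1) ∧ Ideal.Quotient.mk I l = φ ⟨M j, hMI j⟩ := by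
    intro j
    by_cases hj : j ≤ n2
    · have hh : (M j).IsHomogeneous ((n2 - 1) + 1) := by
        rw [show (n2-1)+1 = n2 by omega]
        exact hMhom j hj
      obtain ⟨l, hl, hlq⟩ := hgraded (n2-1) (M j) (hMI j) hh
      exact ⟨l, fun _ => ⟨(mem_homogeneousSubmodule _ _).mp hl, hlq⟩⟩
    · exact ⟨0, fun h => absurd h hj⟩
  choose repM hrepM using hexist_M
  obtain ⟨l, hlmem, hlq⟩ := hgraded 1 Stmt14Aux.qq hqI (by
    rw [show (1:ℕ)+1 = 2 from rfl]; exact hqhom)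
  have hlhom : l.IsHomogeneous 1 := (mem_homogeneousSubmodule _ _).mp hlmem
  set aa : k := coeff (Finsupp.single 2 1) l with haa
  set aa' : k := - coeff (Finsupp.single 3 1) l with haa'
  set bb : k := coeff (Finsupp.single 0 1) l with hbb
  set bb' : k := - coeff (Finsupp.single 1 1) l with hbb'
  have hDq : Stmt14Aux.Dop aa aa' bb bb' Stmt14Aux.qq = l := by
    have p0 : pderiv 0 (Stmt14Aux.qq : S') = X 2 := by
      rw [Stmt14Aux.qq, map_sub, pderiv_mul, pderiv_mul]; simp
    have p1 : pderiv 1 (Stmt14Aux.qq : S') = - X 3 := by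
      rw [Stmt14Aux.qq, map_sub, pderiv_mul, pderiv_mul]; simp
    have p2 : pderiv 2 (Stmt14Aux.qq : S') = X 0 := by
      rw [Stmt14Aux.qq, map_sub, pderiv_mul, pderiv_mul]; simp
    have p3 : pderiv 3 (Stmt14Aux.qq : S') = - X 1 := by
      rw [Stmt14Aux.qq, map_sub, pderiv_mul, pderiv_mul]; simp
    rw [Stmt14Aux.Dop, p0, p1, p2, p3]
    rw [Stmt14Aux.homog1_decomp l hlhom, haa, haa', hbb, hbb']
    module
  -- the trivial tangent operator
  have hsmul_mk : ∀ (r x : S'), r • Ideal.Quotient.mk I x = Ideal.Quotient.mk I (r * x) :=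
    fun r x => rfl
  have hφ_gen_m : ∀ i, i ≤ n1 → φ ⟨m i, hmI i⟩ = Ideal.Quotient.mk I (repm i) :=
    fun i hi => ((hrepm i hi).2).symm
  have hφ_gen_M : ∀ j, j ≤ n2 → φ ⟨M j, hMI j⟩ = Ideal.Quotient.mk I (repM j) :=
    fun j hj => ((hrepM j hj).2).symm
  -- relations for the (x,y)-family
  have hrelm1 : ∀ i, i < n1 →
      X 1 * (repm i - Stmt14Aux.Dop aa aa' bb bb' (m i))
      - X 0 * (repm (i+1) - Stmt14Aux.Dop aa aa' bb bb' (m (i+1))) ∈ I := by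
    intro i hi
    have hid1 : X 1 * m i = X 0 * m (i+1) := by
      rw [hm_def]
      dsimp only
      rw [show n1 - i = (n1 - (i+1)) + 1 by omega]
      ring
    have hmem1 : X 1 * m i ∈ I := Ideal.mul_mem_left _ _ (hmI i)
    have hmem2 : X 0 * m (i+1) ∈ I := Ideal.mul_mem_left _ _ (hmI (i+1))
    have e1 : φ ⟨X 1 * m i, hmem1⟩ = Ideal.Quotient.mk I (X 1 * repm i) := by
      have hsub : (⟨X 1 * m i, hmem1⟩ : I) = (X 1 : S') • ⟨m i, hmI i⟩ := Subtype.ext rfl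
      rw [hsub, map_smul, hφ_gen_m i (by omega), hsmul_mk]
    have e2 : φ ⟨X 0 * m (i+1), hmem2⟩ = Ideal.Quotient.mk I (X 0 * repm (i+1)) := by
      have hsub : (⟨X 0 * m (i+1), hmem2⟩ : I) = (X 0 : S') • ⟨m (i+1), hmI (i+1)⟩ :=
        Subtype.ext rfl
      rw [hsub, map_smul, hφ_gen_m (i+1) (by omega), hsmul_mk]
    have e3 : (⟨X 1 * m i, hmem1⟩ : I) = ⟨X 0 * m (i+1), hmem2⟩ := Subtype.ext hid1
    have hd1 : X 1 * repm i - X 0 * repm (i+1) ∈ I := by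
      apply Ideal.Quotient.eq.mp
      rw [← e1, ← e2, e3]
    have hDid : X 1 * Stmt14Aux.Dop aa aa' bb bb' (m i) + m i * Stmt14Aux.Dop aa aa' bb bb' (X 1)
        = X 0 * Stmt14Aux.Dop aa aa' bb bb' (m (i+1))
          + m (i+1) * Stmt14Aux.Dop aa aa' bb bb' (X 0) := by
      rw [← Stmt14Aux.Dop_mul, ← Stmt14Aux.Dop_mul, hid1]
    have hfin : X 1 * (repm i - Stmt14Aux.Dop aa aa' bb bb' (m i))
        - X 0 * (repm (i+1) - Stmt14Aux.Dop aa aa' bb bb' (m (i+1)))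
        = (X 1 * repm i - X 0 * repm (i+1))
          - (m (i+1) * Stmt14Aux.Dop aa aa' bb bb' (X 0)
            - m i * Stmt14Aux.Dop aa aa' bb bb' (X 1)) := by
      linear_combination - hDid
    rw [hfin]
    exact Ideal.sub_mem _ hd1 (Ideal.sub_mem _
      (Ideal.mul_mem_right _ _ (hmI (i+1))) (Ideal.mul_mem_right _ _ (hmI i)))
  have hrelm2 : ∀ i, i < n1 →
      X 2 * (repm i - Stmt14Aux.Dop aa aa' bb bb' (m i))
      - X 3 * (repm (i+1) - Stmt14Aux.Dop aa aa' bb bb' (m (i+1))) ∈ I := by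
    intro i hi
    have hid2 : X 2 * m i - X 3 * m (i+1) = (X 0 ^ (n1-1-i) * X 1 ^ i) * Stmt14Aux.qq := by
      rw [hm_def, Stmt14Aux.qq]
      dsimp only
      rw [show n1 - i = (n1-1-i) + 1 by omega, show n1 - (i+1) = n1-1-i by omega]
      ring
    have hmem3 : X 2 * m i - X 3 * m (i+1) ∈ I :=
      Ideal.sub_mem _ (Ideal.mul_mem_left _ _ (hmI i)) (Ideal.mul_mem_left _ _ (hmI (i+1)))
    have e4 : φ ⟨X 2 * m i - X 3 * m (i+1), hmem3⟩
        = Ideal.Quotient.mk I (X 2 * repm i - X 3 * repm (i+1)) := by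
      have hsub : (⟨X 2 * m i - X 3 * m (i+1), hmem3⟩ : I)
          = (X 2 : S') • ⟨m i, hmI i⟩ - (X 3 : S') • ⟨m (i+1), hmI (i+1)⟩ := Subtype.ext rfl
      rw [hsub, map_sub, map_smul, map_smul, hφ_gen_m i (by omega),
        hφ_gen_m (i+1) (by omega), hsmul_mk, hsmul_mk, ← map_sub]
    have e5 : φ ⟨X 2 * m i - X 3 * m (i+1), hmem3⟩
        = Ideal.Quotient.mk I ((X 0 ^ (n1-1-i) * X 1 ^ i) * l) := by
      have hsub : (⟨X 2 * m i - X 3 * m (i+1), hmem3⟩ : I)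
          = (X 0 ^ (n1-1-i) * X 1 ^ i : S') • ⟨Stmt14Aux.qq, hqI⟩ := Subtype.ext hid2
      rw [hsub, map_smul, ← hlq, hsmul_mk]
    have hd1 : (X 2 * repm i - X 3 * repm (i+1)) - (X 0 ^ (n1-1-i) * X 1 ^ i) * l ∈ I := by
      apply Ideal.Quotient.eq.mp
      rw [← e4, e5]
    have hDid : (X 2 * Stmt14Aux.Dop aa aa' bb bb' (m i)
          + m i * Stmt14Aux.Dop aa aa' bb bb' (X 2))
        - (X 3 * Stmt14Aux.Dop aa aa' bb bb' (m (i+1))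
          + m (i+1) * Stmt14Aux.Dop aa aa' bb bb' (X 3))
        = (X 0 ^ (n1-1-i) * X 1 ^ i) * Stmt14Aux.Dop aa aa' bb bb' Stmt14Aux.qq
          + Stmt14Aux.qq * Stmt14Aux.Dop aa aa' bb bb' (X 0 ^ (n1-1-i) * X 1 ^ i) := by
      rw [← Stmt14Aux.Dop_mul, ← Stmt14Aux.Dop_mul, ← Stmt14Aux.Dop_mul,
        ← Stmt14Aux.Dop_sub, hid2]
    have hfin : X 2 * (repm i - Stmt14Aux.Dop aa aa' bb bb' (m i))
        - X 3 * (repm (i+1) - Stmt14Aux.Dop aa aa' bb bb' (m (i+1)))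
        = ((X 2 * repm i - X 3 * repm (i+1)) - (X 0 ^ (n1-1-i) * X 1 ^ i) * l)
          - Stmt14Aux.qq * Stmt14Aux.Dop aa aa' bb bb' (X 0 ^ (n1-1-i) * X 1 ^ i)
          + m i * Stmt14Aux.Dop aa aa' bb bb' (X 2)
          - m (i+1) * Stmt14Aux.Dop aa aa' bb bb' (X 3) := by
      linear_combination - hDid - (X 0 ^ (n1-1-i) * X 1 ^ i) * hDq
    rw [hfin]
    refine Ideal.sub_mem _ (Ideal.add_mem _ (Ideal.sub_mem _ hd1
      (Ideal.mul_mem_right _ _ hqI)) (Ideal.mul_mem_right _ _ (hmI i)))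
      (Ideal.mul_mem_right _ _ (hmI (i+1)))
  -- key lemma, (x,y)-family
  have hcpI : ∀ i, i ≤ n1 → repm i - Stmt14Aux.Dop aa aa' bb bb' (m i) ∈ I := by
    intro i hi
    rw [hIdl]
    refine Stmt14Aux.keyLemma h1 h2
      (fun i => repm i - Stmt14Aux.Dop aa aa' bb bb' (m i)) ?_ ?_ ?_ i hi
    · intro i' hi'
      refine le_trans (Stmt14Aux.totalDegree_sub_le' _ _) (max_le ?_ ?_)
      · exact ((hrepm i' hi').1).totalDegree_le
      · rw [hm_mono i']
        refine Stmt14Aux.totalDegree_Dop_monomial_le _ _ ?_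
        simp
        omega
    · intro i' hi'
      rw [← hIdl]
      exact hrelm1 i' hi'
    · intro i' hi'
      rw [← hIdl]
      exact hrelm2 i' hi'
  -- relations for the (z,w)-family
  have hrelM1 : ∀ j, j < n2 →
      X 3 * (repM j - Stmt14Aux.Dop aa aa' bb bb' (M j))
      - X 2 * (repM (j+1) - Stmt14Aux.Dop aa aa' bb bb' (M (j+1))) ∈ I := by
    intro j hj
    have hid1 : X 3 * M j = X 2 * M (j+1) := by
      rw [hM_def]
      dsimp only
      rw [show n2 - j = (n2 - (j+1)) + 1 by omega]
      ring
    have hmem1 : X 3 * M j ∈ I := Ideal.mul_mem_left _ _ (hMI j)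
    have hmem2 : X 2 * M (j+1) ∈ I := Ideal.mul_mem_left _ _ (hMI (j+1))
    have e1 : φ ⟨X 3 * M j, hmem1⟩ = Ideal.Quotient.mk I (X 3 * repM j) := by
      have hsub : (⟨X 3 * M j, hmem1⟩ : I) = (X 3 : S') • ⟨M j, hMI j⟩ := Subtype.ext rfl
      rw [hsub, map_smul, hφ_gen_M j (by omega), hsmul_mk]
    have e2 : φ ⟨X 2 * M (j+1), hmem2⟩ = Ideal.Quotient.mk I (X 2 * repM (j+1)) := by
      have hsub : (⟨X 2 * M (j+1), hmem2⟩ : I) = (X 2 : S') • ⟨M (j+1), hMI (j+1)⟩ :=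
        Subtype.ext rfl
      rw [hsub, map_smul, hφ_gen_M (j+1) (by omega), hsmul_mk]
    have e3 : (⟨X 3 * M j, hmem1⟩ : I) = ⟨X 2 * M (j+1), hmem2⟩ := Subtype.ext hid1
    have hd1 : X 3 * repM j - X 2 * repM (j+1) ∈ I := by
      apply Ideal.Quotient.eq.mp
      rw [← e1, ← e2, e3]
    have hDid : X 3 * Stmt14Aux.Dop aa aa' bb bb' (M j) + M j * Stmt14Aux.Dop aa aa' bb bb' (X 3)
        = X 2 * Stmt14Aux.Dop aa aa' bb bb' (M (j+1))
          + M (j+1) * Stmt14Aux.Dop aa aa' bb bb' (X 2) := by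
      rw [← Stmt14Aux.Dop_mul, ← Stmt14Aux.Dop_mul, hid1]
    have hfin : X 3 * (repM j - Stmt14Aux.Dop aa aa' bb bb' (M j))
        - X 2 * (repM (j+1) - Stmt14Aux.Dop aa aa' bb bb' (M (j+1)))
        = (X 3 * repM j - X 2 * repM (j+1))
          - (M (j+1) * Stmt14Aux.Dop aa aa' bb bb' (X 2)
            - M j * Stmt14Aux.Dop aa aa' bb bb' (X 3)) := by
      linear_combination - hDid
    rw [hfin]
    exact Ideal.sub_mem _ hd1 (Ideal.sub_mem _
      (Ideal.mul_mem_right _ _ (hMI (j+1))) (Ideal.mul_mem_right _ _ (hMI j)))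
  have hrelM2 : ∀ j, j < n2 →
      X 0 * (repM j - Stmt14Aux.Dop aa aa' bb bb' (M j))
      - X 1 * (repM (j+1) - Stmt14Aux.Dop aa aa' bb bb' (M (j+1))) ∈ I := by
    intro j hj
    have hid2 : X 0 * M j - X 1 * M (j+1) = (X 2 ^ (n2-1-j) * X 3 ^ j) * Stmt14Aux.qq := by
      rw [hM_def, Stmt14Aux.qq]
      dsimp only
      rw [show n2 - j = (n2-1-j) + 1 by omega, show n2 - (j+1) = n2-1-j by omega]
      ring
    have hmem3 : X 0 * M j - X 1 * M (j+1) ∈ I :=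
      Ideal.sub_mem _ (Ideal.mul_mem_left _ _ (hMI j)) (Ideal.mul_mem_left _ _ (hMI (j+1)))
    have e4 : φ ⟨X 0 * M j - X 1 * M (j+1), hmem3⟩
        = Ideal.Quotient.mk I (X 0 * repM j - X 1 * repM (j+1)) := by
      have hsub : (⟨X 0 * M j - X 1 * M (j+1), hmem3⟩ : I)
          = (X 0 : S') • ⟨M j, hMI j⟩ - (X 1 : S') • ⟨M (j+1), hMI (j+1)⟩ := Subtype.ext rfl
      rw [hsub, map_sub, map_smul, map_smul, hφ_gen_M j (by omega),
        hφ_gen_M (j+1) (by omega), hsmul_mk, hsmul_mk, ← map_sub]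
    have e5 : φ ⟨X 0 * M j - X 1 * M (j+1), hmem3⟩
        = Ideal.Quotient.mk I ((X 2 ^ (n2-1-j) * X 3 ^ j) * l) := by
      have hsub : (⟨X 0 * M j - X 1 * M (j+1), hmem3⟩ : I)
          = (X 2 ^ (n2-1-j) * X 3 ^ j : S') • ⟨Stmt14Aux.qq, hqI⟩ := Subtype.ext hid2
      rw [hsub, map_smul, ← hlq, hsmul_mk]
    have hd1 : (X 0 * repM j - X 1 * repM (j+1)) - (X 2 ^ (n2-1-j) * X 3 ^ j) * l ∈ I := by
      apply Ideal.Quotient.eq.mp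
      rw [← e4, e5]
    have hDid : (X 0 * Stmt14Aux.Dop aa aa' bb bb' (M j)
          + M j * Stmt14Aux.Dop aa aa' bb bb' (X 0))
        - (X 1 * Stmt14Aux.Dop aa aa' bb bb' (M (j+1))
          + M (j+1) * Stmt14Aux.Dop aa aa' bb bb' (X 1))
        = (X 2 ^ (n2-1-j) * X 3 ^ j) * Stmt14Aux.Dop aa aa' bb bb' Stmt14Aux.qq
          + Stmt14Aux.qq * Stmt14Aux.Dop aa aa' bb bb' (X 2 ^ (n2-1-j) * X 3 ^ j) := by
      rw [← Stmt14Aux.Dop_mul, ← Stmt14Aux.Dop_mul, ← Stmt14Aux.Dop_mul,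
        ← Stmt14Aux.Dop_sub, hid2]
    have hfin : X 0 * (repM j - Stmt14Aux.Dop aa aa' bb bb' (M j))
        - X 1 * (repM (j+1) - Stmt14Aux.Dop aa aa' bb bb' (M (j+1)))
        = ((X 0 * repM j - X 1 * repM (j+1)) - (X 2 ^ (n2-1-j) * X 3 ^ j) * l)
          - Stmt14Aux.qq * Stmt14Aux.Dop aa aa' bb bb' (X 2 ^ (n2-1-j) * X 3 ^ j)
          + M j * Stmt14Aux.Dop aa aa' bb bb' (X 0)
          - M (j+1) * Stmt14Aux.Dop aa aa' bb bb' (X 1) := by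
      linear_combination - hDid - (X 2 ^ (n2-1-j) * X 3 ^ j) * hDq
    rw [hfin]
    refine Ideal.sub_mem _ (Ideal.add_mem _ (Ideal.sub_mem _ hd1
      (Ideal.mul_mem_right _ _ hqI)) (Ideal.mul_mem_right _ _ (hMI j)))
      (Ideal.mul_mem_right _ _ (hMI (j+1)))
  -- key lemma, (z,w)-family via the swap
  have hdpI : ∀ j, j ≤ n2 → repM j - Stmt14Aux.Dop aa aa' bb bb' (M j) ∈ I := by
    intro j hj
    have hkey := Stmt14Aux.keyLemma h2 h1
      (fun j => Stmt14Aux.sw (repM j - Stmt14Aux.Dop aa aa' bb bb' (M j))) ?_ ?_ ?_ j hj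
    · rw [hIdl]
      have := Stmt14Aux.sw_mem_Idl hkey
      rwa [Stmt14Aux.sw_sw] at this
    · intro j' hj'
      refine Stmt14Aux.sw_totalDegree _ ?_
      refine le_trans (Stmt14Aux.totalDegree_sub_le' _ _) (max_le ?_ ?_)
      · exact ((hrepM j' hj').1).totalDegree_le
      · rw [hM_mono j']
        refine Stmt14Aux.totalDegree_Dop_monomial_le _ _ ?_
        simp
        omega
    · intro j' hj'
      have hswid : Stmt14Aux.sw (X 3 * (repM j' - Stmt14Aux.Dop aa aa' bb bb' (M j'))
            - X 2 * (repM (j'+1) - Stmt14Aux.Dop aa aa' bb bb' (M (j'+1))))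
          = X 1 * Stmt14Aux.sw (repM j' - Stmt14Aux.Dop aa aa' bb bb' (M j'))
          - X 0 * Stmt14Aux.sw (repM (j'+1) - Stmt14Aux.Dop aa aa' bb bb' (M (j'+1))) := by
        rw [map_sub, map_mul, map_mul, Stmt14Aux.sw_X3, Stmt14Aux.sw_X2]
      rw [← hswid]
      exact Stmt14Aux.sw_mem_Idl (hIdl ▸ hrelM1 j' hj')
    · intro j' hj'
      have hswid : Stmt14Aux.sw (X 0 * (repM j' - Stmt14Aux.Dop aa aa' bb bb' (M j'))
            - X 1 * (repM (j'+1) - Stmt14Aux.Dop aa aa' bb bb' (M (j'+1))))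
          = X 2 * Stmt14Aux.sw (repM j' - Stmt14Aux.Dop aa aa' bb bb' (M j'))
          - X 3 * Stmt14Aux.sw (repM (j'+1) - Stmt14Aux.Dop aa aa' bb bb' (M (j'+1))) := by
        rw [map_sub, map_mul, map_mul, Stmt14Aux.sw_X0, Stmt14Aux.sw_X1]
      rw [← hswid]
      exact Stmt14Aux.sw_mem_Idl (hIdl ▸ hrelM2 j' hj')
  -- final span induction
  have hspanG : I = Ideal.span ((((fun i => (X 0:S')^(n1-i) * X 1^i) '' {i | i ≤ n1})
      ∪ ((fun j => (X 2:S')^(n2-j) * X 3^j) '' {j | j ≤ n2})) ∪ {Stmt14Aux.qq}) := by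
    rw [hIdl]
    exact Stmt14Aux.Idl_eq_span n1 n2
  refine ⟨aa, aa', bb, bb', ?_⟩
  intro p hp
  have hsp : p ∈ Ideal.span ((((fun i => (X 0:S')^(n1-i) * X 1^i) '' {i | i ≤ n1})
      ∪ ((fun j => (X 2:S')^(n2-j) * X 3^j) '' {j | j ≤ n2})) ∪ {Stmt14Aux.qq}) := by
    rw [← hspanG]
    exact hp
  have main : ∀ hx : p ∈ I, φ ⟨p, hx⟩
      = Ideal.Quotient.mk I (Stmt14Aux.Dop aa aa' bb bb' p) := by
    refine Submodule.span_induction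
      (p := fun x _ => ∀ hx : x ∈ I,
        φ ⟨x, hx⟩ = Ideal.Quotient.mk I (Stmt14Aux.Dop aa aa' bb bb' x))
      ?_ ?_ ?_ ?_ hsp
    · rintro x ((⟨i, hi, rfl⟩ | ⟨j, hj, rfl⟩) | rfl) hx
      · simp only [Set.mem_setOf_eq] at hi
        have hsub : (⟨_, hx⟩ : I) = ⟨m i, hmI i⟩ := Subtype.ext rfl
        rw [hsub, hφ_gen_m i hi]
        exact Ideal.Quotient.eq.mpr (hcpI i hi)
      · simp only [Set.mem_setOf_eq] at hj
        have hsub : (⟨_, hx⟩ : I) = ⟨M j, hMI j⟩ := Subtype.ext rfl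
        rw [hsub, hφ_gen_M j hj]
        exact Ideal.Quotient.eq.mpr (hdpI j hj)
      · have hsub : (⟨_, hx⟩ : I) = ⟨Stmt14Aux.qq, hqI⟩ := Subtype.ext rfl
        rw [hsub, ← hlq, hDq]
    · intro hx
      have hsub : (⟨(0:S'), hx⟩ : I) = 0 := Subtype.ext rfl
      rw [hsub, map_zero, Stmt14Aux.Dop_zero, map_zero]
    · intro x y hxs hys ihx ihy hxy
      have hxI : x ∈ I := by rw [hspanG]; exact hxs
      have hyI : y ∈ I := by rw [hspanG]; exact hys
      have hsub : (⟨x + y, hxy⟩ : I) = ⟨x, hxI⟩ + ⟨y, hyI⟩ := Subtype.ext rfl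
      rw [hsub, map_add, ihx hxI, ihy hyI, Stmt14Aux.Dop_add, map_add]
    · intro r x hxs ih hrx
      have hxI : x ∈ I := by rw [hspanG]; exact hxs
      have hsub : (⟨r • x, hrx⟩ : I) = r • ⟨x, hxI⟩ := Subtype.ext rfl
      rw [hsub, map_smul, ih hxI, hsmul_mk]
      refine Ideal.Quotient.eq.mpr ?_
      have hcal : r * Stmt14Aux.Dop aa aa' bb bb' x - Stmt14Aux.Dop aa aa' bb bb' (r • x)
          = - (x * Stmt14Aux.Dop aa aa' bb bb' r) := by
        rw [smul_eq_mul, Stmt14Aux.Dop_mul]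
        ring
      rw [hcal]
      exact neg_mem (Ideal.mul_mem_right _ _ hxI)
  have hres := main hp
  rw [show aa • pderiv 0 p + aa' • pderiv 1 p + bb • pderiv 2 p + bb' • pderiv 3 p
    = Stmt14Aux.Dop aa aa' bb bb' p from rfl]
  exact hres
end

section
/- Let $k$ be a field, $S = k[x,y,z,w]$, $n_1, n_2 \ge 2$, $I = (x,y)^{n_1} + (z,w)^{n_2} + (xz-yw)$, and $A = S/I$. If $p, q \in A$ satisfy $\bar{y} p = \bar{x} q$, then there exist $p', q' \in \mathrm{Ann}_A(\bar{x})$ and elements $r_y, r_w \in A$ such that $p = p' + \bar{x} r_y + \bar{w} r_w$ and $q = q' + \bar{y} r_y + \bar{z} r_w$. -/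
/-!
Lift `ȳ p = x̄ q` to `y P - x Q = F + G (xz - yw)` with `F ∈ (x,y)^{n₁} + (z,w)^{n₂}`; replacing
`P, Q` by `P + G w, Q + G z` shows that `F` also lies in `(x,y)`. Since `(z,w)^{n₂}` is generated by
polynomials in `z, w`, the retraction `x, y ↦ 0` gives `(x,y) ∩ (z,w)^{n₂} = (x,y) (z,w)^{n₂}`, so
`F = x B + y A` with `A, B ∈ (x,y)^{n₁-1} + (z,w)^{n₂}`, an ideal that `x` multiplies into `I`.
Then `y (P + G w - A) = x (Q + G z + B)`, and as `x, y` are coprime both sides equal `x y C`; so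
`p = Ā + x̄ C̄ - w̄ Ḡ` and `q = -B̄ + ȳ C̄ - z̄ Ḡ`.
-/

open MvPolynomial

theorem Ideal.mem_span_pair_mul {R : Type*} [CommRing R] {a b x : R} {J : Ideal R} :
    x ∈ Ideal.span {a, b} * J ↔ ∃ u ∈ J, ∃ v ∈ J, a * u + b * v = x := by
  rw [Ideal.span_insert, Ideal.sup_mul, Submodule.mem_sup]
  simp only [Ideal.mem_span_singleton_mul]
  constructor
  · rintro ⟨_, ⟨u, hu, rfl⟩, _, ⟨v, hv, rfl⟩, rfl⟩
    exact ⟨u, hu, v, hv, rfl⟩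
  · rintro ⟨u, hu, v, hv, rfl⟩
    exact ⟨_, ⟨u, hu, rfl⟩, _, ⟨v, hv, rfl⟩, rfl⟩

theorem RingHom.ker_inf_le_ker_mul {R F : Type*} [CommRing R] [FunLike F R R]
    [RingHomClass F R R] (φ : F) (hφ : ∀ x, φ (φ x) = φ x) {J : Ideal R}
    (hJ : J.map φ = J) : RingHom.ker φ ⊓ J ≤ RingHom.ker φ * J := by
  have key : ∀ x ∈ J, x - φ x ∈ RingHom.ker φ * J := by
    intro x hx
    rw [← hJ] at hx
    induction hx using Submodule.span_induction with
    | mem _ h =>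
      obtain ⟨y, -, rfl⟩ := h
      simp [hφ]
    | zero => simp
    | add x y _ _ hx hy =>
      rw [map_add, add_sub_add_comm]
      exact add_mem hx hy
    | smul c x hxJ hx =>
      replace hxJ : x ∈ J := hJ ▸ hxJ
      have hc : c - φ c ∈ RingHom.ker φ := by simp [RingHom.mem_ker, hφ]
      rw [smul_eq_mul, map_mul, show c * x - φ c * φ x = (c - φ c) * x + φ c * (x - φ x) by ring]
      exact add_mem (Ideal.mul_mem_mul hc hxJ) (Ideal.mul_mem_left _ _ hx)
  rintro x ⟨hxφ, hxJ⟩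
  simpa [(RingHom.mem_ker).mp hxφ] using key x hxJ

theorem MvPolynomial.sub_aeval_mem {σ R : Type*} [CommRing R]
    {K : Ideal (MvPolynomial σ R)} (f : σ → MvPolynomial σ R) (hf : ∀ i, X i - f i ∈ K)
    (p : MvPolynomial σ R) : p - aeval f p ∈ K := by
  rw [← Ideal.Quotient.eq, ← Ideal.Quotient.mkₐ_eq_mk R, ← AlgHom.comp_apply]
  congr 1
  refine (MvPolynomial.algHom_ext fun i => ?_).symm
  simpa [Ideal.Quotient.mkₐ_eq_mk] using (Ideal.Quotient.eq.mpr (hf i)).symm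

theorem Prime.exists_eq_mul_of_mul_eq_mul {R : Type*} [CommRing R] [IsDomain R] {a b u v : R}
    (ha : Prime a) (hab : ¬ a ∣ b) (h : b * u = a * v) : ∃ c, u = a * c ∧ v = b * c := by
  obtain ⟨c, rfl⟩ := (ha.dvd_or_dvd ⟨v, h⟩).resolve_left hab
  refine ⟨c, rfl, mul_left_cancel₀ ha.ne_zero ?_⟩
  linear_combination -h

theorem Ideal.inf_pow_succ_sup_le_mul {R : Type*} [CommRing R] {K L : Ideal R}
    (h : K ⊓ L ≤ K * L) (m : ℕ) : K ⊓ (K ^ (m + 1) ⊔ L) ≤ K * (K ^ m ⊔ L) :=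
  calc K ⊓ (K ^ (m + 1) ⊔ L) = K ^ (m + 1) ⊔ K ⊓ L := by
        rw [inf_comm, sup_inf_assoc_of_le L (Ideal.pow_le_self m.succ_ne_zero), inf_comm]
    _ ≤ K * K ^ m ⊔ K * L := sup_le_sup (pow_succ' K m).le h
    _ = K * (K ^ m ⊔ L) := (Ideal.mul_sup K _ L).symm

theorem Ideal.mul_mem_pow_succ_sup {R : Type*} [CommRing R] {K L : Ideal R} {m : ℕ} {a u : R}
    (ha : a ∈ K) (hu : u ∈ K ^ m ⊔ L) : a * u ∈ K ^ (m + 1) ⊔ L := by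
  obtain ⟨s, hs, t, ht, rfl⟩ := Submodule.mem_sup.mp hu
  rw [mul_add]
  exact add_mem (Ideal.mem_sup_left (pow_succ' K m ▸ Ideal.mul_mem_mul ha hs))
    (Ideal.mem_sup_right (Ideal.mul_mem_left L a ht))

section ZW

variable (k : Type*) [CommRing k]

noncomputable def retractZW : MvPolynomial (Fin 4) k →ₐ[k] MvPolynomial (Fin 4) k :=
  aeval ![0, 0, X 2, X 3]

variable {k}

theorem retractZW_retractZW (p : MvPolynomial (Fin 4) k) :
    retractZW k (retractZW k p) = retractZW k p := by
  rw [← AlgHom.comp_apply]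
  congr 1
  refine MvPolynomial.algHom_ext fun i => ?_
  fin_cases i <;> simp [retractZW]

theorem ker_retractZW :
    RingHom.ker (retractZW k) = Ideal.span {X 0, X 1} := by
  refine le_antisymm (fun p hp => ?_) (Ideal.span_le.mpr ?_)
  · have hX : ∀ i, X i - ![0, 0, X 2, X 3] i ∈
        (Ideal.span {X 0, X 1} : Ideal (MvPolynomial (Fin 4) k)) := by
      intro i
      fin_cases i <;> simp <;> exact Ideal.subset_span (by simp)
    have h : p - retractZW k p ∈ _ := MvPolynomial.sub_aeval_mem _ hX p
    rwa [(RingHom.mem_ker).mp hp, sub_zero] at h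
  · simp [Set.insert_subset_iff, retractZW]

theorem map_retractZW_span_zw_pow (n : ℕ) :
    (Ideal.span {X 2, X 3} ^ n : Ideal (MvPolynomial (Fin 4) k)).map (retractZW k) =
      Ideal.span {X 2, X 3} ^ n := by
  simp [Ideal.map_pow, Ideal.map_span, Set.image_pair, retractZW]

theorem span_xy_inf_span_zw_pow_le (n : ℕ) :
    Ideal.span {X 0, X 1} ⊓ Ideal.span {X 2, X 3} ^ n ≤
      (Ideal.span {X 0, X 1} * Ideal.span {X 2, X 3} ^ n : Ideal (MvPolynomial (Fin 4) k)) := by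
  rw [← ker_retractZW]
  exact RingHom.ker_inf_le_ker_mul _ retractZW_retractZW (map_retractZW_span_zw_pow n)

end ZW

theorem stmt15_general (k : Type*) [Field k] (n1 n2 : ℕ) (h1 : 2 ≤ n1)
    (I : Ideal (MvPolynomial (Fin 4) k))
    (hI : I = (Ideal.span {X 0, X 1}) ^ n1 + (Ideal.span {X 2, X 3}) ^ n2
        + Ideal.span {X 0 * X 2 - X 1 * X 3}) :
    ∀ p q : MvPolynomial (Fin 4) k ⧸ I,
      Ideal.Quotient.mk I (X 1) * p = Ideal.Quotient.mk I (X 0) * q →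
      ∃ p' q' ry rw : MvPolynomial (Fin 4) k ⧸ I,
        Ideal.Quotient.mk I (X 0) * p' = 0 ∧
        Ideal.Quotient.mk I (X 0) * q' = 0 ∧
        p = p' + Ideal.Quotient.mk I (X 0) * ry + Ideal.Quotient.mk I (X 3) * rw ∧
        q = q' + Ideal.Quotient.mk I (X 1) * ry + Ideal.Quotient.mk I (X 2) * rw := by
  intro p q hpq
  obtain ⟨P, rfl⟩ := Ideal.Quotient.mk_surjective p
  obtain ⟨Q, rfl⟩ := Ideal.Quotient.mk_surjective q
  obtain ⟨m, rfl⟩ : ∃ m, n1 = m + 1 := ⟨n1 - 1, by omega⟩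
  have hmem : X 1 * P - X 0 * Q ∈ I := Ideal.Quotient.eq.mp (by simpa using hpq)
  have hKL : Ideal.span {X 0, X 1} ^ (m + 1) ⊔ Ideal.span {X 2, X 3} ^ n2 ≤ I := by
    rw [hI, Submodule.add_eq_sup, Submodule.add_eq_sup]
    exact le_sup_left
  rw [hI, Submodule.add_eq_sup, Submodule.add_eq_sup] at hmem
  obtain ⟨F, hF, _, hG, hsum⟩ := Submodule.mem_sup.mp hmem
  obtain ⟨G, rfl⟩ := Ideal.mem_span_singleton'.mp hG
  have hFxy : F ∈ Ideal.span {X 0, X 1} := Ideal.mem_span_pair.mpr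
    ⟨-(Q + G * X 2), P + G * X 3, by linear_combination -hsum⟩
  obtain ⟨B, hB, A, hA, hBA⟩ := Ideal.mem_span_pair_mul.mp
    (Ideal.inf_pow_succ_sup_le_mul (span_xy_inf_span_zw_pow_le n2) m ⟨hFxy, hF⟩)
  obtain ⟨C, hPC, hQC⟩ := Prime.exists_eq_mul_of_mul_eq_mul X_prime (by simp)
    (show X 1 * (P + G * X 3 - A) = X 0 * (Q + G * X 2 + B) by
      linear_combination -hsum - hBA)
  have hann : ∀ u ∈ Ideal.span {X 0, X 1} ^ m ⊔ Ideal.span {X 2, X 3} ^ n2,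
      Ideal.Quotient.mk I (X 0) * Ideal.Quotient.mk I u = 0 := fun u hu => by
    rw [← map_mul, Ideal.Quotient.eq_zero_iff_mem]
    exact hKL (Ideal.mul_mem_pow_succ_sup (Ideal.subset_span (by simp)) hu)
  refine ⟨Ideal.Quotient.mk _ A, Ideal.Quotient.mk _ (-B), Ideal.Quotient.mk _ C,
    Ideal.Quotient.mk _ (-G), hann A hA, hann _ (neg_mem hB), ?_, ?_⟩ <;>
  simp only [← map_mul, ← map_add] <;>
  congr 1
  · linear_combination hPC
  · linear_combination hQC

theorem stmt15 (k : Type*) [Field k] (n1 n2 : ℕ) (h1 : 2 ≤ n1) (h2 : 2 ≤ n2)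
    (I : Ideal (MvPolynomial (Fin 4) k))
    (hI : I = (Ideal.span {X 0, X 1}) ^ n1 + (Ideal.span {X 2, X 3}) ^ n2
        + Ideal.span {X 0 * X 2 - X 1 * X 3}) :
    ∀ p q : MvPolynomial (Fin 4) k ⧸ I,
      Ideal.Quotient.mk I (X 1) * p = Ideal.Quotient.mk I (X 0) * q →
      ∃ p' q' ry rw : MvPolynomial (Fin 4) k ⧸ I,
        Ideal.Quotient.mk I (X 0) * p' = 0 ∧
        Ideal.Quotient.mk I (X 0) * q' = 0 ∧
        p = p' + Ideal.Quotient.mk I (X 0) * ry + Ideal.Quotient.mk I (X 3) * rw ∧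
        q = q' + Ideal.Quotient.mk I (X 1) * ry + Ideal.Quotient.mk I (X 2) * rw :=
  stmt15_general k n1 n2 h1 I hI
end
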